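/- arXiv:1803.01293 — 14 statements merged into one kernel-verified Lean document; each statement's English description precedes it below -/
import Mathlib

section
/- Let A be an n×n 0-1 matrix with A² a 0-1 matrix, fix a vertex v with out-degree d, let V₁ = N⁺(v) and V₂ be its complement. If there exist indices t₁, t₂, t₃ ∈ V₁ with a_{t₁t₂} = a_{t₂t₃} = 1, and every u ∈ V₂ satisfies N⁺(u) = V₁ (i.e., a_{uj} = 1 exactly when j ∈ V₁), then t₁ has no successor in V₂ (i.e., a_{t₁u} = 0 for all u ∈ V₂). -/
/-- Lemma 3 (le3): if there is a 2-walk `t₁ → t₂ → t₃` inside `V₁ = N⁺(v)` and every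
`u ∈ V₂` satisfies `N⁺(u) = V₁`, then `t₁` has no successor in `V₂`. -/
theorem stmt_2 (n : ℕ) (A : Matrix (Fin n) (Fin n) ℤ)
    (hA : ∀ i j, A i j = 0 ∨ A i j = 1)
    (hA2 : ∀ i j, (A * A) i j = 0 ∨ (A * A) i j = 1)
    (v t₁ t₂ t₃ : Fin n)
    (ht₁ : A v t₁ = 1) (ht₂ : A v t₂ = 1) (ht₃ : A v t₃ = 1)
    (h12 : A t₁ t₂ = 1) (h23 : A t₂ t₃ = 1)
    (hV₂ : ∀ u, A v u = 0 → ∀ j, A u j = 1 ↔ A v j = 1) :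
    ∀ u, A v u = 0 → A t₁ u = 0 := by
  intro u hu
  by_contra h
  have h1u : A t₁ u = 1 := (hA t₁ u).resolve_left h
  have hu3 : A u t₃ = 1 := (hV₂ u hu t₃).mpr ht₃
  have hne : t₂ ≠ u := by
    intro he; rw [he] at ht₂; omega
  have hge : (2 : ℤ) ≤ (A * A) t₁ t₃ := by
    have hsub : ({t₂, u} : Finset (Fin n)) ⊆ Finset.univ := Finset.subset_univ _
    have hsum : ∑ k ∈ ({t₂, u} : Finset (Fin n)), A t₁ k * A k t₃ ≤
        ∑ k ∈ Finset.univ, A t₁ k * A k t₃ := by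
      apply Finset.sum_le_sum_of_subset_of_nonneg hsub
      intro i _ _
      rcases hA t₁ i with h' | h' <;> rcases hA i t₃ with h'' | h'' <;>
        simp [h', h'']
    rw [Finset.sum_pair hne, h12, h23, h1u, hu3] at hsum
    simpa [Matrix.mul_apply] using hsum
  rcases hA2 t₁ t₃ with h' | h' <;> omega
end

section
/- Let A be an n×n 0-1 matrix with zero trace such that A² is a 0-1 matrix, and let Δ⁺ be the maximum row sum of A. Then the total number of 1-entries of A is at most n + (n − Δ⁺)·Δ⁺. -/
/-- If `A` is a 0-1 matrix with zero trace whose square is a 0-1 matrix and `d = Δ⁺` is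
its maximum row sum, then the number of ones of `A` is at most `n + (n - d)·d`. -/
theorem stmt_3 (n : ℕ) (A : Matrix (Fin n) (Fin n) ℤ)
    (hA : ∀ i j, A i j = 0 ∨ A i j = 1)
    (htr : ∀ i, A i i = 0)
    (hA2 : ∀ i j, (A * A) i j = 0 ∨ (A * A) i j = 1)
    (d : ℤ) (hd : IsGreatest (Set.range fun i => ∑ j, A i j) d) :
    ∑ i, ∑ j, A i j ≤ (n : ℤ) + ((n : ℤ) - d) * d := by
  obtain ⟨⟨i0, hi0⟩, hub⟩ := hd
  have hub' : ∀ k, ∑ j, A k j ≤ d := fun k => hub ⟨k, rfl⟩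
  have h01 : ∀ i j, 0 ≤ A i j ∧ A i j ≤ 1 := fun i j => by
    rcases hA i j with h | h <;> simp [h]
  have step1 : ∑ k, A i0 k * ∑ j, A k j ≤ (n : ℤ) := by
    calc ∑ k, A i0 k * ∑ j, A k j = ∑ j, (A * A) i0 j := by
          simp only [Finset.mul_sum, Matrix.mul_apply]
          rw [Finset.sum_comm]
      _ ≤ ∑ _j : Fin n, (1 : ℤ) := Finset.sum_le_sum fun j _ => by
          rcases hA2 i0 j with h | h <;> simp [h]
      _ = n := by simp
  have step2 : ∑ k, (1 - A i0 k) * ∑ j, A k j ≤ ((n : ℤ) - d) * d := by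
    calc ∑ k, (1 - A i0 k) * ∑ j, A k j ≤ ∑ k, (1 - A i0 k) * d :=
          Finset.sum_le_sum fun k _ =>
            mul_le_mul_of_nonneg_left (hub' k) (by linarith [(h01 i0 k).2])
      _ = ((n : ℤ) - d) * d := by
          rw [← Finset.sum_mul]
          congr 1
          rw [Finset.sum_sub_distrib]
          simp only at hi0
          rw [hi0]
          simp
  have total : ∑ i, ∑ j, A i j
      = ∑ k, A i0 k * ∑ j, A k j + ∑ k, (1 - A i0 k) * ∑ j, A k j := by
    rw [← Finset.sum_add_distrib]
    exact Finset.sum_congr rfl fun k _ => by ring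
  linarith
end

section
/- For every integer n ≥ 3, there exists an n×n 0-1 matrix A with zero trace such that A² is a 0-1 matrix and A has at least (n² + 4n − 5)/4 entries equal to 1 when n is odd, and at least (n² + 4n − 4)/4 entries equal to 1 when n is even. -/
/-!
With `a = n / 2`, split `{0, …, n-1}` into `X = {p < a}` and `Y = {p ≥ a}` with hub `a ∈ Y`.
Take every arc `X → Y`, arcs from the hub to the rest of `Y`, the matching `p ↦ p - a - 1` from
`Y \ {a}` back into `X`, and for even `n` the extra arc `a → a - 1`. The middle vertex of a
2-walk is determined by its ends, so the adjacency matrix `A` has `A² ∈ {0,1}`, and there are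
`a (n - a) + 2 (n - a - 1) + [n even]` arcs, which is exactly the bound.
-/

open Finset

namespace Digraph

variable {V : Type*} (R : Type*) [NonAssocSemiring R] (G : Digraph V) [DecidableRel G.Adj]

def adjMatrix : Matrix V V R := Matrix.of fun i j => if G.Adj i j then 1 else 0

variable {R}

theorem adjMatrix_apply_eq_zero_or_one (i j : V) :
    G.adjMatrix R i j = 0 ∨ G.adjMatrix R i j = 1 := by
  by_cases h : G.Adj i j <;> simp [adjMatrix, h]

theorem adjMatrix_apply_of_not_adj {i j : V} (h : ¬ G.Adj i j) : G.adjMatrix R i j = 0 :=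
  if_neg h

variable [Fintype V]

theorem adjMatrix_mul_self_apply (i j : V) :
    (G.adjMatrix R * G.adjMatrix R) i j = #{k | G.Adj i k ∧ G.Adj k j} := by
  rw [Matrix.mul_apply, card_filter, Nat.cast_sum]
  refine sum_congr rfl fun k _ => ?_
  simp only [adjMatrix, Matrix.of_apply, ite_zero_mul_ite_zero, mul_one, apply_ite Nat.cast,
    Nat.cast_one, Nat.cast_zero]

theorem adjMatrix_mul_self_apply_eq_zero_or_one {i j : V}
    (h : ∀ k k', G.Adj i k → G.Adj k j → G.Adj i k' → G.Adj k' j → k = k') :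
    (G.adjMatrix R * G.adjMatrix R) i j = 0 ∨ (G.adjMatrix R * G.adjMatrix R) i j = 1 := by
  have hcard : #{k | G.Adj i k ∧ G.Adj k j} ≤ 1 := card_le_one.2 fun k hk k' hk' => by
    rw [mem_filter] at hk hk'
    exact h k k' hk.2.1 hk.2.2 hk'.2.1 hk'.2.2
  rw [adjMatrix_mul_self_apply]
  rcases Nat.le_one_iff_eq_zero_or_eq_one.1 hcard with h0 | h1
  · exact Or.inl (by rw [h0, Nat.cast_zero])
  · exact Or.inr (by rw [h1, Nat.cast_one])

theorem sum_adjMatrix : ∑ i, ∑ j, G.adjMatrix R i j = ∑ i, (#{j | G.Adj i j} : R) := by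
  simp only [adjMatrix, Matrix.of_apply, sum_boole]

end Digraph

theorem Fin.card_filter_univ_val {n : ℕ} (p : ℕ → Prop) [DecidablePred p] :
    #{i : Fin n | p i} = #{q ∈ range n | p q} := by
  rw [← card_map Fin.valEmbedding, map_filter', Fin.map_valEmbedding_univ, Nat.Iio_eq_range]
  congr 1
  exact filter_congr fun q hq =>
    ⟨fun ⟨a, ha, h⟩ => h ▸ ha, fun h => ⟨⟨q, mem_range.1 hq⟩, h, rfl⟩⟩

def ExtremalAdj (n p q : ℕ) : Prop :=
  (p < n / 2 ∧ n / 2 ≤ q) ∨ (p = n / 2 ∧ n / 2 < q) ∨ (n / 2 < p ∧ q + n / 2 + 1 = p) ∨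
    (n % 2 = 0 ∧ p = n / 2 ∧ q + 1 = n / 2)

instance (n : ℕ) : DecidableRel (ExtremalAdj n) := fun p q => by
  unfold ExtremalAdj; infer_instance

namespace ExtremalAdj

variable {n p : ℕ}

theorem irrefl (p : ℕ) : ¬ ExtremalAdj n p p := by
  unfold ExtremalAdj; omega

theorem middle_unique {i j k k' : ℕ} (hk : k < n) (hk' : k' < n)
    (hik : ExtremalAdj n i k) (hkj : ExtremalAdj n k j)
    (hik' : ExtremalAdj n i k') (hk'j : ExtremalAdj n k' j) : k = k' := by
  unfold ExtremalAdj at *; omega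

theorem filter_of_lt (hp : p < n / 2) : {q ∈ range n | ExtremalAdj n p q} = Ico (n / 2) n := by
  ext q; rw [mem_filter, mem_range, mem_Ico]; unfold ExtremalAdj; omega

theorem card_filter_half (hn : 0 < n) :
    #{q ∈ range n | ExtremalAdj n (n / 2) q} = n - n / 2 - 1 + if n % 2 = 0 then 1 else 0 := by
  split_ifs with h
  · rw [show {q ∈ range n | ExtremalAdj n (n / 2) q} = insert (n / 2 - 1) (Ioo (n / 2) n) by
      ext q; rw [mem_filter, mem_range, mem_insert, mem_Ioo]; unfold ExtremalAdj; omega]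
    rw [card_insert_of_notMem (by rw [mem_Ioo]; omega), Nat.card_Ioo]
  · rw [show {q ∈ range n | ExtremalAdj n (n / 2) q} = Ioo (n / 2) n by
      ext q; rw [mem_filter, mem_range, mem_Ioo]; unfold ExtremalAdj; omega]
    rw [Nat.card_Ioo]; rfl

theorem filter_of_gt (hp : n / 2 < p) (hpn : p < n) :
    {q ∈ range n | ExtremalAdj n p q} = {p - n / 2 - 1} := by
  ext q; rw [mem_filter, mem_range, mem_singleton]; unfold ExtremalAdj; omega

theorem sum_card_filter (hn : 0 < n) :
    ∑ p ∈ range n, #{q ∈ range n | ExtremalAdj n p q} =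
      n / 2 * (n - n / 2) + 2 * (n - n / 2 - 1) + if n % 2 = 0 then 1 else 0 := by
  rw [← sum_range_add_sum_Ico _ (Nat.div_le_self n 2), sum_eq_sum_Ico_succ_bot (by omega),
    card_filter_half hn, sum_congr rfl fun p hp => congrArg card (filter_of_lt (mem_range.1 hp)),
    sum_congr rfl fun p hp => congrArg card (filter_of_gt (mem_Ico.1 hp).1 (mem_Ico.1 hp).2)]
  simp only [sum_const, card_range, Nat.card_Ico, card_singleton, smul_eq_mul, mul_one]
  omega

theorem four_mul_sum_card_filter_add (hn : 0 < n) :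
    4 * ∑ p ∈ range n, #{q ∈ range n | ExtremalAdj n p q} + 4 + n % 2 = n ^ 2 + 4 * n := by
  rw [sum_card_filter hn]
  obtain ⟨a, rfl | rfl⟩ := n.even_or_odd'
  · obtain ⟨b, rfl⟩ : ∃ b, a = b + 1 := ⟨a - 1, by omega⟩
    rw [if_pos (by omega), show 2 * (b + 1) / 2 = b + 1 by omega,
      show 2 * (b + 1) - (b + 1) = b + 1 by omega, show 2 * (b + 1) % 2 = 0 by omega]
    simp only [Nat.add_sub_cancel]
    ring
  · rw [if_neg (by omega), show (2 * a + 1) / 2 = a by omega,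
      show 2 * a + 1 - a = a + 1 by omega, show (2 * a + 1) % 2 = 1 by omega]
    simp only [Nat.add_sub_cancel]
    ring

end ExtremalAdj

def extremalDigraph (n : ℕ) : Digraph (Fin n) where
  Adj i j := ExtremalAdj n i j

instance (n : ℕ) : DecidableRel (extremalDigraph n).Adj := fun i j =>
  inferInstanceAs (Decidable (ExtremalAdj n i j))

theorem four_mul_sum_adjMatrix_extremalDigraph_add {n : ℕ} (hn : 0 < n) :
    4 * ∑ i, ∑ j, (extremalDigraph n).adjMatrix ℤ i j + 4 + (n % 2 : ℕ) = n ^ 2 + 4 * n := by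
  have key := ExtremalAdj.four_mul_sum_card_filter_add hn
  rw [Digraph.sum_adjMatrix, ← Nat.cast_sum]
  have hdeg (i : Fin n) :
      #{j | (extremalDigraph n).Adj i j} = #{q ∈ range n | ExtremalAdj n i q} :=
    Fin.card_filter_univ_val (ExtremalAdj n i)
  rw [sum_congr rfl fun i _ => hdeg i,
    Fin.sum_univ_eq_sum_range (fun p => #{q ∈ range n | ExtremalAdj n p q})]
  exact_mod_cast key

/-- Lemma 1 (le8), lower bound: for every `n ≥ 3` there is an `n×n` 0-1 matrix with zero
trace whose square is a 0-1 matrix having at least `(n²+4n−5)/4` ones if `n` is odd and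
at least `(n²+4n−4)/4` ones if `n` is even. -/
theorem stmt_4 :
    ∀ n : ℕ, 3 ≤ n → ∃ A : Matrix (Fin n) (Fin n) ℤ,
      (∀ i j, A i j = 0 ∨ A i j = 1) ∧
      (∀ i, A i i = 0) ∧
      (∀ i j, (A * A) i j = 0 ∨ (A * A) i j = 1) ∧
      (Odd n → (n : ℤ)^2 + 4 * n - 5 ≤ 4 * ∑ i, ∑ j, A i j) ∧
      (Even n → (n : ℤ)^2 + 4 * n - 4 ≤ 4 * ∑ i, ∑ j, A i j) := by
  intro n hn
  have hcount := four_mul_sum_adjMatrix_extremalDigraph_add (by omega : 0 < n)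
  refine ⟨(extremalDigraph n).adjMatrix ℤ, (extremalDigraph n).adjMatrix_apply_eq_zero_or_one,
    fun i => (extremalDigraph n).adjMatrix_apply_of_not_adj (ExtremalAdj.irrefl i),
    fun i j => ?_, fun hodd => ?_, fun heven => ?_⟩
  · exact (extremalDigraph n).adjMatrix_mul_self_apply_eq_zero_or_one fun k k' hik hkj hik' hk'j =>
      Fin.ext (ExtremalAdj.middle_unique k.isLt k'.isLt hik hkj hik' hk'j)
  · rw [Nat.odd_iff.1 hodd] at hcount
    push_cast at hcount
    linarith
  · rw [Nat.even_iff.1 heven] at hcount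
    push_cast at hcount
    linarith
end

section
/- Let n ≥ 8 and let A be an n×n 0-1 matrix with zero trace such that A² is a 0-1 matrix. Then the number of 1-entries of A is at most ⌊(n² + 4n)/4⌋ − 1. -/
open Finset

namespace Stmt5Aux

variable {n : ℕ} (A : Matrix (Fin n) (Fin n) ℤ)

/-- out-neighborhood of `u` in the digraph of `A`. -/
def Nout (u : Fin n) : Finset (Fin n) := Finset.univ.filter (fun v => A u v = 1)

lemma mem_Nout {u v : Fin n} : v ∈ Nout A u ↔ A u v = 1 := by simp [Nout]

section
variable (hA : ∀ i j, A i j = 0 ∨ A i j = 1)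
include hA

lemma rowsum (u : Fin n) : ∑ v, A u v = ((Nout A u).card : ℤ) := by
  rw [Nout, card_filter]
  push_cast
  refine Finset.sum_congr rfl (fun v _ => ?_)
  rcases hA u v with h | h <;> simp [h]

lemma walkcount (u w : Fin n) :
    (A * A) u w = ((Finset.univ.filter (fun v => A u v = 1 ∧ A v w = 1)).card : ℤ) := by
  rw [Matrix.mul_apply, card_filter]
  push_cast
  refine Finset.sum_congr rfl (fun v _ => ?_)
  rcases hA u v with h | h <;> rcases hA v w with h' | h' <;> simp [h, h']

variable (hA2 : ∀ i j, (A * A) i j = 0 ∨ (A * A) i j = 1)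
include hA2

lemma walk_le_one (u w : Fin n) :
    (Finset.univ.filter (fun v => A u v = 1 ∧ A v w = 1)).card ≤ 1 := by
  have h := walkcount A hA u w
  rcases hA2 u w with h2 | h2 <;> rw [h] at h2 <;> omega

lemma no_two_walks {u v v' w : Fin n} (h1 : A u v = 1) (h2 : A u v' = 1) (hne : v ≠ v')
    (h3 : A v w = 1) (h4 : A v' w = 1) : False := by
  have hsub : ({v, v'} : Finset (Fin n)) ⊆
      Finset.univ.filter (fun x => A u x = 1 ∧ A x w = 1) := by
    intro x hx
    simp only [mem_insert, mem_singleton] at hx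
    rcases hx with rfl | rfl <;> simp [h1, h2, h3, h4]
  have := card_le_card hsub
  rw [card_pair hne] at this
  have := walk_le_one A hA hA2 u w
  omega

lemma row_walk_sum (u : Fin n) : ∑ v ∈ Nout A u, (Nout A v).card ≤ n := by
  calc ∑ v ∈ Nout A u, (Nout A v).card
      = ∑ v ∈ Nout A u, ∑ w : Fin n, (if A v w = 1 then 1 else 0) := by
        refine Finset.sum_congr rfl (fun v _ => ?_)
        rw [Nout, card_filter]
    _ = ∑ w : Fin n, ∑ v ∈ Nout A u, (if A v w = 1 then 1 else 0) := Finset.sum_comm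
    _ ≤ ∑ _w : Fin n, 1 := by
        refine Finset.sum_le_sum (fun w _ => ?_)
        have heq : ((Nout A u).filter (fun v => A v w = 1)) =
            Finset.univ.filter (fun v => A u v = 1 ∧ A v w = 1) := by
          rw [Nout, filter_filter]
        calc ∑ v ∈ Nout A u, (if A v w = 1 then 1 else 0)
            = ((Nout A u).filter (fun v => A v w = 1)).card := (card_filter _ _).symm
          _ ≤ 1 := by rw [heq]; exact walk_le_one A hA hA2 u w
    _ = n := by simp

end

lemma main (hn : 8 ≤ n)
    (hA : ∀ i j, A i j = 0 ∨ A i j = 1)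
    (htr : ∀ i, A i i = 0)
    (hA2 : ∀ i j, (A * A) i j = 0 ∨ (A * A) i j = 1)
    (Nout : Fin n → Finset (Fin n))
    (mem_Nout : ∀ u v, v ∈ Nout u ↔ A u v = 1)
    (no_two_walks : ∀ {u v v' w : Fin n}, A u v = 1 → A u v' = 1 → v ≠ v' →
      A v w = 1 → A v' w = 1 → False)
    (row_walk_sum : ∀ u, ∑ v ∈ Nout u, (Nout v).card ≤ n) :
    ∑ u : Fin n, (Nout u).card ≤ n*n/4 + n - 1 := by
  -- maximum out-degree vertex
  obtain ⟨u, -, humax⟩ := Finset.exists_max_image Finset.univ (fun v => (Nout v).card)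
    ⟨⟨0, by omega⟩, mem_univ _⟩
  set Δ := (Nout u).card with hΔdef
  have hΔle : ∀ v, (Nout v).card ≤ Δ := fun v => humax v (mem_univ v)
  have hcardc : ∀ s : Finset (Fin n), (Finset.univ \ s).card = n - s.card := by
    intro s; rw [card_sdiff_of_subset (subset_univ s)]; simp
  have hΔn : Δ ≤ n := by
    have := card_le_card (subset_univ (Nout u)); simpa using this
  -- basic splitting of the total sum at an arbitrary vertex
  have hsplit : ∀ w : Fin n, ∑ v ∈ Finset.univ \ Nout w, (Nout v).card
      + ∑ v ∈ Nout w, (Nout v).card = ∑ v : Fin n, (Nout v).card := by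
    intro w; exact Finset.sum_sdiff (subset_univ _)
  have hics : ∀ w : Fin n, ∑ v ∈ Finset.univ \ Nout w, (Nout v).card
      ≤ (n - (Nout w).card) * Δ := by
    intro w
    calc ∑ v ∈ Finset.univ \ Nout w, (Nout v).card
        ≤ (Finset.univ \ Nout w).card • Δ := Finset.sum_le_card_nsmul _ _ _
          (fun v _ => hΔle v)
      _ = (n - (Nout w).card) * Δ := by rw [hcardc]; simp [mul_comm]
  -- main inequality
  have key1 : ∑ v : Fin n, (Nout v).card ≤ n + Δ * (n - Δ) := by
    have h1 := hsplit u
    have h2 := hics u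
    have h3 := row_walk_sum u
    rw [← hΔdef] at h2
    have : (n - Δ) * Δ = Δ * (n - Δ) := mul_comm _ _
    omega
  have hquad : Δ * (n - Δ) ≤ n*n/4 := by
    rw [Nat.le_div_iff_mul_le (by norm_num)]
    zify [hΔn]
    nlinarith [sq_nonneg ((n : ℤ) - 2*Δ)]
  -- suppose not
  by_contra hcon
  have hE : ∑ v : Fin n, (Nout v).card = n*n/4 + n := by omega
  have hq : Δ * (n - Δ) = n*n/4 := by omega
  have hsum_eq : ∑ v : Fin n, (Nout v).card = n + Δ * (n - Δ) := by omega
  -- equality conditions at every max-degree vertex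
  have hstruct : ∀ u', (Nout u').card = Δ →
      (∑ v ∈ Nout u', (Nout v).card = n) ∧ ∀ v, v ∉ Nout u' → (Nout v).card = Δ := by
    intro u' hu'
    have h1 := hsplit u'
    have h2 := hics u'
    have h3 := row_walk_sum u'
    rw [hu'] at h2
    have hmc : (n - Δ) * Δ = Δ * (n - Δ) := mul_comm _ _
    have hout : ∑ v ∈ Finset.univ \ Nout u', (Nout v).card = (n - Δ) * Δ := by omega
    refine ⟨by omega, ?_⟩
    intro v hv
    by_contra hne
    have hvmem : v ∈ Finset.univ \ Nout u' := by simp [hv]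
    have hlt : ∑ x ∈ Finset.univ \ Nout u', (Nout x).card
        < ∑ _x ∈ Finset.univ \ Nout u', Δ := by
      refine Finset.sum_lt_sum (fun i _ => hΔle i) ⟨v, hvmem, ?_⟩
      exact lt_of_le_of_ne (hΔle v) hne
    rw [Finset.sum_const, smul_eq_mul] at hlt
    rw [hcardc] at hlt
    rw [hu'] at hlt
    omega
  -- 2Δ is within 1 of n
  have hΔrange : n ≤ 2*Δ + 1 ∧ 2*Δ ≤ n + 1 := by
    have h4 : 4 * (Δ * (n - Δ)) ≥ n*n - 3 := by omega
    have h3nn : 3 ≤ n*n := by nlinarith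
    zify [hΔn, h3nn] at h4
    constructor
    · by_contra h; push_neg at h
      have h' : (2*Δ : ℤ) + 2 ≤ (n : ℤ) := by exact_mod_cast by omega
      nlinarith
    · by_contra h; push_neg at h
      have h' : (n : ℤ) + 2 ≤ (2*Δ : ℤ) := by exact_mod_cast by omega
      nlinarith
  have hΔ4 : 4 ≤ Δ := by omega
  have hnΔΔ : n < Δ * Δ := by nlinarith [hΔrange.1]
  classical
  -- a vertex of small out-degree inside Nout u
  have hrowu := (hstruct u hΔdef.symm).1
  obtain ⟨k, hkNu, hklt⟩ : ∃ k ∈ Nout u, (Nout k).card < Δ := by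
    by_contra h; push_neg at h
    have hge : (Nout u).card • Δ ≤ ∑ v ∈ Nout u, (Nout v).card :=
      Finset.card_nsmul_le_sum _ _ _ (fun v hv => h v hv)
    rw [← hΔdef, smul_eq_mul, hrowu] at hge
    omega
  have hkM : ∀ u', (Nout u').card = Δ → k ∈ Nout u' := by
    intro u' h'
    by_contra hk
    have := (hstruct u' h').2 k hk
    omega
  -- two distinct max-degree vertices never share an in-neighbor
  have hE7 : ∀ x v v', A x v = 1 → A x v' = 1 → (Nout v).card = Δ →
      (Nout v').card = Δ → v = v' := by
    intro x v v' h1 h2 hv hv'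
    by_contra hne
    exact no_two_walks h1 h2 hne ((mem_Nout v k).1 (hkM v hv)) ((mem_Nout v' k).1 (hkM v' hv'))
  -- out-neighborhoods of Nout u' cover everything, for max-degree u'
  have hpart : ∀ u', (Nout u').card = Δ → ∀ w : Fin n, ∃ v ∈ Nout u', A v w = 1 := by
    intro u' hu' w
    have hd : ∀ x ∈ Nout u', ∀ y ∈ Nout u', x ≠ y → Disjoint (Nout x) (Nout y) := by
      intro x hx y hy hxy
      rw [Finset.disjoint_left]
      intro a ha hay
      exact no_two_walks ((mem_Nout u' x).1 hx) ((mem_Nout u' y).1 hy) hxy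
        ((mem_Nout x a).1 ha) ((mem_Nout y a).1 hay)
    have hcard : ((Nout u').biUnion Nout).card = n := by
      rw [Finset.card_biUnion hd]; exact (hstruct u' hu').1
    have huniv : (Nout u').biUnion Nout = Finset.univ :=
      Finset.eq_univ_of_card _ (by rw [hcard, Fintype.card_fin])
    have hwmem : w ∈ (Nout u').biUnion Nout := by rw [huniv]; exact mem_univ w
    obtain ⟨v, hv, hw'⟩ := Finset.mem_biUnion.1 hwmem
    exact ⟨v, hv, (mem_Nout v w).1 hw'⟩
  -- covering map t for u
  have hexu : ∀ w : Fin n, ∃ v, v ∈ Nout u ∧ A v w = 1 := by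
    intro w; obtain ⟨v, hv, h⟩ := hpart u hΔdef.symm w; exact ⟨v, hv, h⟩
  choose t ht1 ht2 using hexu
  -- the set of max-degree vertices
  set M := Finset.univ.filter (fun v => (Nout v).card = Δ) with hMdef
  have hMmem : ∀ v, v ∈ M ↔ (Nout v).card = Δ := by intro v; simp [hMdef]
  have huM : u ∈ M := (hMmem u).2 hΔdef.symm
  have hmn : M.card ≤ n := by have := card_le_card (subset_univ M); simpa using this
  have hmΔ : M.card ≤ Δ := by
    refine Finset.card_le_card_of_injOn t (fun w _ => ht1 w) ?_
    intro w hw w' hw' he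
    exact hE7 (t w) w w' (ht2 w) (he ▸ ht2 w') ((hMmem w).1 hw) ((hMmem w').1 hw')
  have hMcsub : ∀ u' ∈ M, ∀ v, v ∉ M → v ∈ Nout u' := by
    intro u' hu' v hv
    by_contra h
    exact hv ((hMmem v).2 ((hstruct u' ((hMmem u').1 hu')).2 v h))
  have hsubcard : ∀ p, (∀ w' ∈ Nout p, w' ∈ M) → (Nout p).card ≤ 1 := by
    intro p hp
    refine Finset.card_le_one.mpr (fun a ha b hb => ?_)
    exact hE7 p a b ((mem_Nout p a).1 ha) ((mem_Nout p b).1 hb)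
      ((hMmem a).1 (hp a ha)) ((hMmem b).1 (hp b hb))
  -- cardinality identity for Nout of a max-degree vertex
  have hcs : ∀ u' ∈ M, (Nout u' ∩ M).card + (n - M.card) = Δ ∧ (Nout u' ∩ M).card ≤ 1 := by
    intro u' hu'
    constructor
    · have hsd : Nout u' \ M = Finset.univ \ M := by
        apply Finset.Subset.antisymm
        · intro v hv
          simp only [mem_sdiff, mem_univ, true_and]
          exact (mem_sdiff.1 hv).2
        · intro v hv
          have hvM := (mem_sdiff.1 hv).2
          exact mem_sdiff.2 ⟨hMcsub u' hu' v hvM, hvM⟩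
      have := Finset.card_inter_add_card_sdiff (Nout u') M
      rw [hsd, hcardc M, (hMmem u').1 hu'] at this
      exact this
    · refine Finset.card_le_one.mpr (fun a ha b hb => ?_)
      have ha' := mem_inter.1 ha
      have hb' := mem_inter.1 hb
      exact hE7 u' a b ((mem_Nout u' a).1 ha'.1) ((mem_Nout u' b).1 hb'.1)
        ((hMmem a).1 ha'.2) ((hMmem b).1 hb'.2)
  -- scenario split on the unique max-degree out-neighbor count of u
  have hcu := hcs u huM
  rcases Nat.le_one_iff_eq_zero_or_eq_one.1 hcu.2 with h0 | h1
  · -- Scenario I : Nout u' = univ \ M for all u' ∈ M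
    have hΔnm : Δ = n - M.card := by have := hcu.1; omega
    have hNoutM : ∀ u' ∈ M, Nout u' = Finset.univ \ M := by
      intro u' hu'
      have h0' : (Nout u' ∩ M).card = 0 := by have := (hcs u' hu').1; omega
      rw [card_eq_zero] at h0'
      apply Finset.Subset.antisymm
      · intro v hv
        simp only [mem_sdiff, mem_univ, true_and]
        intro hvM
        have : v ∈ Nout u' ∩ M := mem_inter.2 ⟨hv, hvM⟩
        rw [h0'] at this
        exact absurd this (notMem_empty v)
      · intro v hv
        exact hMcsub u' hu' v (mem_sdiff.1 hv).2
    have ht1' : ∀ w, t w ∈ Finset.univ \ M := by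
      intro w; rw [← hNoutM u huM]; exact ht1 w
    set Q := (Finset.univ \ M).filter (fun v => (Nout v ∩ M).Nonempty) with hQdef
    have hQsub : Q ⊆ Finset.univ \ M := filter_subset _ _
    have hQm : M.card ≤ Q.card := by
      refine Finset.card_le_card_of_injOn t (fun w hw => ?_) ?_
      · exact mem_filter.2 ⟨ht1' w, ⟨w, mem_inter.2 ⟨(mem_Nout (t w) w).2 (ht2 w), hw⟩⟩⟩
      · intro w hw w' hw' he
        exact hE7 (t w) w w' (ht2 w) (he ▸ ht2 w') ((hMmem w).1 hw) ((hMmem w').1 hw')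
    have hRcard : ((Finset.univ \ M) \ Q).card ≤ 1 := by
      rw [card_sdiff_of_subset hQsub, hcardc M]
      omega
    have hruleSub : ∀ v ∈ Q, ∀ p, A v p = 1 → p ∉ M → ∀ w' ∈ Nout p, w' ∈ M := by
      intro v hvQ p hp hpM w' hw'
      obtain ⟨x, hx⟩ := (mem_filter.1 hvQ).2
      have hxN := (mem_inter.1 hx).1
      have hxM := (mem_inter.1 hx).2
      have hpx : p ≠ x := fun h => hpM (h ▸ hxM)
      by_contra hw'M
      have hwx : w' ∈ Nout x := by
        rw [hNoutM x hxM]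
        simp only [mem_sdiff, mem_univ, true_and]
        exact hw'M
      exact no_two_walks hp ((mem_Nout v x).1 hxN) hpx ((mem_Nout p w').1 hw')
        ((mem_Nout x w').1 hwx)
    have hr0 : ∀ r ∈ (Finset.univ \ M) \ Q, Nout r = ∅ := by
      intro r hr
      have hrC := (mem_sdiff.1 hr).1
      have hrQ := (mem_sdiff.1 hr).2
      have htrr : t r ≠ r := by
        intro h
        have h2 := ht2 r
        rw [h, htr r] at h2
        norm_num at h2
      have htQ : t r ∈ Q := by
        by_contra h
        have h2T : t r ∈ (Finset.univ \ M) \ Q := mem_sdiff.2 ⟨ht1' r, h⟩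
        have hsub2 : ({r, t r} : Finset (Fin n)) ⊆ (Finset.univ \ M) \ Q := by
          intro x hx
          rcases mem_insert.1 hx with rfl | hx
          · exact hr
          · rw [mem_singleton.1 hx]; exact h2T
        have := card_le_card hsub2
        rw [card_pair (Ne.symm htrr)] at this
        omega
      have hsub3 := hruleSub (t r) htQ r (ht2 r) (mem_sdiff.1 hrC).2
      have hne : ¬ (Nout r ∩ M).Nonempty := by
        intro hcontra
        exact hrQ (mem_filter.2 ⟨hrC, hcontra⟩)
      rw [eq_empty_iff_forall_notMem]
      intro w' hw'
      exact hne ⟨w', mem_inter.2 ⟨hw', hsub3 w' hw'⟩⟩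
    have hle1 : ∀ w ∈ Finset.univ \ M, (Nout w).card ≤ 1 := by
      intro w hw
      have htwQ : t w ∈ Q := by
        by_contra h
        have h2T : t w ∈ (Finset.univ \ M) \ Q := mem_sdiff.2 ⟨ht1' w, h⟩
        have := hr0 (t w) h2T
        have hwmem : w ∈ Nout (t w) := (mem_Nout (t w) w).2 (ht2 w)
        rw [this] at hwmem
        exact absurd hwmem (notMem_empty w)
      exact hsubcard w (hruleSub (t w) htwQ w (ht2 w) (mem_sdiff.1 hw).2)
    have hsum := (hstruct u hΔdef.symm).1
    rw [hNoutM u huM] at hsum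
    have hfin : ∑ v ∈ Finset.univ \ M, (Nout v).card ≤ (Finset.univ \ M).card • 1 :=
      Finset.sum_le_card_nsmul _ _ _ hle1
    rw [hcardc M, smul_eq_mul, mul_one, hsum] at hfin
    omega
  · -- Scenario II
    have hc1 : ∀ u' ∈ M, (Nout u' ∩ M).card = 1 := by
      intro u' hu'
      have := (hcs u' hu').1
      have h2 := hcu.1
      omega
    have hmΔeq : M.card = Δ ∧ 2*Δ = n + 1 := by
      have := hcu.1
      omega
    -- the unique max-degree out-neighbor
    have hgex : ∀ u', ∃ x, u' ∈ M → Nout u' ∩ M = {x} := by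
      intro u'
      by_cases h : u' ∈ M
      · obtain ⟨x, hx⟩ := card_eq_one.1 (hc1 u' h)
        exact ⟨x, fun _ => hx⟩
      · exact ⟨u', fun h' => absurd h' h⟩
    choose g hg using hgex
    have hgM : ∀ u' ∈ M, g u' ∈ M ∧ A u' (g u') = 1 := by
      intro u' hu'
      have hmem : g u' ∈ Nout u' ∩ M := by rw [hg u' hu']; exact mem_singleton_self _
      exact ⟨(mem_inter.1 hmem).2, (mem_Nout u' (g u')).1 (mem_inter.1 hmem).1⟩
    have hNoutM2 : ∀ u' ∈ M, Nout u' = insert (g u') (Finset.univ \ M) := by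
      intro u' hu'
      apply Finset.Subset.antisymm
      · intro v hv
        by_cases hvM : v ∈ M
        · have : v ∈ Nout u' ∩ M := mem_inter.2 ⟨hv, hvM⟩
          rw [hg u' hu'] at this
          rw [mem_singleton.1 this]
          exact mem_insert_self _ _
        · exact mem_insert_of_mem (mem_sdiff.2 ⟨mem_univ v, hvM⟩)
      · rw [Finset.insert_subset_iff]
        refine ⟨(mem_Nout u' (g u')).2 (hgM u' hu').2, fun v hv => ?_⟩
        exact hMcsub u' hu' v (mem_sdiff.1 hv).2
    have hpMsub : ∀ p ∈ Finset.univ \ M, ∀ w' ∈ Nout p, w' ∈ M := by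
      intro p hp w' hw'
      have hpN : p ∈ Nout u := by rw [hNoutM2 u huM]; exact mem_insert_of_mem hp
      have hxM := (hgM u huM).1
      have hpx : p ≠ g u := fun h => (mem_sdiff.1 hp).2 (h ▸ hxM)
      by_contra hw'M
      have hwx : w' ∈ Nout (g u) := by
        rw [hNoutM2 (g u) hxM]
        exact mem_insert_of_mem (mem_sdiff.2 ⟨mem_univ w', hw'M⟩)
      exact no_two_walks ((mem_Nout u p).1 hpN) (hgM u huM).2 hpx
        ((mem_Nout p w').1 hw') ((mem_Nout (g u) w').1 hwx)
    -- every vertex outside M has out-degree exactly one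
    have hone : ∀ p ∈ Finset.univ \ M, (Nout p).card = 1 := by
      have hsum := (hstruct u hΔdef.symm).1
      rw [hNoutM2 u huM] at hsum
      have hgnot : g u ∉ Finset.univ \ M := by
        simp only [mem_sdiff, mem_univ, true_and, not_not]
        exact (hgM u huM).1
      rw [Finset.sum_insert hgnot, (hMmem (g u)).1 (hgM u huM).1] at hsum
      -- hsum : Δ + ∑_{univ\M} card = n
      have hcardeq : (Finset.univ \ M).card = n - Δ := by
        rw [hcardc M]; omega
      intro p hp
      by_contra hne
      have hp1 : (Nout p).card ≤ 1 := hsubcard p (hpMsub p hp)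
      have hlt : ∑ v ∈ Finset.univ \ M, (Nout v).card
          < ∑ _v ∈ Finset.univ \ M, 1 := by
        refine Finset.sum_lt_sum (fun i hi => hsubcard i (hpMsub i hi)) ⟨p, hp, ?_⟩
        omega
      rw [Finset.sum_const, smul_eq_mul, mul_one, hcardeq] at hlt
      omega
    have hfex : ∀ p, ∃ x, p ∈ Finset.univ \ M → Nout p = {x} := by
      intro p
      by_cases h : p ∈ Finset.univ \ M
      · obtain ⟨x, hx⟩ := card_eq_one.1 (hone p h)
        exact ⟨x, fun _ => hx⟩
      · exact ⟨p, fun h' => absurd h' h⟩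
    choose f hf using hfex
    have hfmem : ∀ p ∈ Finset.univ \ M, A p (f p) = 1 := by
      intro p hp
      exact (mem_Nout p (f p)).1 (by rw [hf p hp]; exact mem_singleton_self _)
    -- (i) : f never hits g (g u')
    have hfNe : ∀ u' ∈ M, ∀ p ∈ Finset.univ \ M, f p ≠ g (g u') := by
      intro u' hu' p hp heq
      have hxM := (hgM u' hu').1
      have hpN : p ∈ Nout u' := by rw [hNoutM2 u' hu']; exact mem_insert_of_mem hp
      have hpx : p ≠ g u' := fun h => (mem_sdiff.1 hp).2 (h ▸ hxM)
      exact no_two_walks ((mem_Nout u' p).1 hpN) (hgM u' hu').2 hpx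
        (hfmem p hp) (heq ▸ (hgM (g u') hxM).2)
    -- (ii) : f covers M except g (g u')
    have hcover : ∀ u' ∈ M, ∀ w ∈ M, w ≠ g (g u') →
        ∃ p ∈ Finset.univ \ M, f p = w := by
      intro u' hu' w hwM hne
      obtain ⟨v, hvN, hvw⟩ := hpart u' ((hMmem u').1 hu') w
      rw [hNoutM2 u' hu'] at hvN
      rcases mem_insert.1 hvN with rfl | hvC
      · have hwmem : w ∈ Nout (g u') := (mem_Nout (g u') w).2 hvw
        rw [hNoutM2 (g u') (hgM u' hu').1] at hwmem
        rcases mem_insert.1 hwmem with h | h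
        · exact absurd h hne
        · exact absurd hwM (mem_sdiff.1 h).2
      · refine ⟨v, hvC, ?_⟩
        have hwmem : w ∈ Nout v := (mem_Nout v w).2 hvw
        rw [hf v hvC] at hwmem
        exact (mem_singleton.1 hwmem).symm
    have hggconst : ∀ u₁ ∈ M, ∀ u₂ ∈ M, g (g u₁) = g (g u₂) := by
      intro u₁ h₁ u₂ h₂
      by_contra hne
      have hwM : g (g u₁) ∈ M := (hgM (g u₁) (hgM u₁ h₁).1).1
      obtain ⟨p, hp, hfp⟩ := hcover u₂ h₂ (g (g u₁)) hwM hne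
      exact hfNe u₁ h₁ p hp hfp
    have hzM : g (g u) ∈ M := (hgM (g u) (hgM u huM).1).1
    have hwM2 : g (g (g u)) ∈ M := (hgM (g (g u)) hzM).1
    have h1 : g (g (g (g u))) = g (g u) := hggconst (g (g u)) hzM u huM
    have h2 : g (g (g (g (g u)))) = g (g u) := hggconst (g (g (g u))) hwM2 u huM
    rw [h1] at h2
    -- h2 : g (g (g u)) = g (g u)
    have hedge := (hgM (g (g u)) hzM).2
    rw [h2] at hedge
    rw [htr (g (g u))] at hedge
    norm_num at hedge

end Stmt5Aux



/-- Main theorem, upper bound: for `n ≥ 8`, a 0-1 matrix of order `n` with zero trace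
whose square is a 0-1 matrix has at most `⌊(n²+4n)/4⌋ − 1` ones. -/
theorem stmt_5 (n : ℕ) (hn : 8 ≤ n) (A : Matrix (Fin n) (Fin n) ℤ)
    (hA : ∀ i j, A i j = 0 ∨ A i j = 1)
    (htr : ∀ i, A i i = 0)
    (hA2 : ∀ i j, (A * A) i j = 0 ∨ (A * A) i j = 1) :
    ∑ i, ∑ j, A i j ≤ (((n^2 + 4*n) / 4 : ℕ) : ℤ) - 1 := by
  have hmain := Stmt5Aux.main A hn hA htr hA2 (Stmt5Aux.Nout A)
    (fun u v => Stmt5Aux.mem_Nout A)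
    (fun {u v v' w} => Stmt5Aux.no_two_walks A hA hA2)
    (Stmt5Aux.row_walk_sum A hA hA2)
  have hrs : ∑ i, ∑ j, A i j = ((∑ u, (Stmt5Aux.Nout A u).card : ℕ) : ℤ) := by
    push_cast
    exact Finset.sum_congr rfl (fun u _ => Stmt5Aux.rowsum A hA u)
  rw [hrs]
  have hdiv : (n^2 + 4*n)/4 = n*n/4 + n := by
    rw [pow_two]
    exact Nat.add_mul_div_left _ _ (by norm_num)
  rw [hdiv]
  omega
end

section
/- Let n ≥ 8 and let A be an n×n 0-1 matrix with zero trace, A² a 0-1 matrix, and exactly ⌊(n²+4n)/4⌋ − 1 entries equal to 1. If n is odd, then the maximum row sum Δ⁺ of A is (n−1)/2 or (n+1)/2; if n is even, then Δ⁺ ∈ {n/2 − 1, n/2, n/2 + 1}. -/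
/-- Lemma 4 (le4): if `A` is extremal (zero trace, square 0-1, with `⌊(n²+4n)/4⌋−1` ones,
`n ≥ 8`) and `d = Δ⁺` is its maximum row sum, then `d ∈ {(n−1)/2, (n+1)/2}` for odd `n`
and `d ∈ {n/2−1, n/2, n/2+1}` for even `n`. -/
theorem stmt_6 (n : ℕ) (hn : 8 ≤ n) (A : Matrix (Fin n) (Fin n) ℤ)
    (hA : ∀ i j, A i j = 0 ∨ A i j = 1)
    (htr : ∀ i, A i i = 0)
    (hA2 : ∀ i j, (A * A) i j = 0 ∨ (A * A) i j = 1)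
    (hext : ∑ i, ∑ j, A i j = (((n^2 + 4*n) / 4 : ℕ) : ℤ) - 1)
    (d : ℤ) (hd : IsGreatest (Set.range fun i => ∑ j, A i j) d) :
    (Odd n → 2 * d = (n : ℤ) - 1 ∨ 2 * d = (n : ℤ) + 1) ∧
    (Even n → 2 * d = (n : ℤ) - 2 ∨ 2 * d = (n : ℤ) ∨ 2 * d = (n : ℤ) + 2) := by
  obtain ⟨hmem, hub⟩ := hd
  obtain ⟨i₀, hi₀⟩ := hmem
  simp only at hi₀
  have hrd : ∀ k : Fin n, ∑ j, A k j ≤ d := fun k => hub (Set.mem_range_self k)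
  -- key inequality : E ≤ n + (n - d) * d
  have h1 : ∑ k, A i₀ k * ∑ j, A k j ≤ (n : ℤ) := by
    calc ∑ k, A i₀ k * ∑ j, A k j = ∑ k, ∑ j, A i₀ k * A k j := by
          simp [Finset.mul_sum]
      _ = ∑ j, ∑ k, A i₀ k * A k j := Finset.sum_comm
      _ = ∑ j, (A * A) i₀ j := by simp [Matrix.mul_apply]
      _ ≤ ∑ _j : Fin n, (1 : ℤ) := Finset.sum_le_sum fun j _ => by
            rcases hA2 i₀ j with h | h <;> simp [h]
      _ = n := by simp
  have h2 : ∑ k, (1 - A i₀ k) * ∑ j, A k j ≤ ((n : ℤ) - d) * d := by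
    calc ∑ k, (1 - A i₀ k) * ∑ j, A k j ≤ ∑ k, (1 - A i₀ k) * d :=
          Finset.sum_le_sum fun k _ => mul_le_mul_of_nonneg_left (hrd k)
            (by rcases hA i₀ k with h | h <;> simp [h])
      _ = (∑ k, (1 - A i₀ k)) * d := by rw [Finset.sum_mul]
      _ = ((n : ℤ) - d) * d := by
          rw [Finset.sum_sub_distrib, hi₀]; simp
  have key : ∑ i, ∑ j, A i j ≤ (n : ℤ) + ((n : ℤ) - d) * d := by
    have : ∑ i, ∑ j, A i j
        = ∑ k, A i₀ k * ∑ j, A k j + ∑ k, (1 - A i₀ k) * ∑ j, A k j := by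
      rw [← Finset.sum_add_distrib]
      exact Finset.sum_congr rfl fun k _ => by ring
    rw [this]; exact add_le_add h1 h2
  rw [hext] at key
  constructor
  · rintro ⟨m, hm⟩
    have hdiv : (n^2 + 4*n) / 4 = m^2 + 3*m + 1 := by
      have h : n^2 + 4*n = 4*(m^2 + 3*m + 1) + 1 := by subst hm; ring
      omega
    rw [hdiv] at key
    push_cast at key
    have hm' : (n : ℤ) = 2*m + 1 := by exact_mod_cast congrArg (Nat.cast : ℕ → ℤ) hm
    rw [hm'] at key ⊢
    have ht : (2*d - (2*(m:ℤ)+1))^2 ≤ 5 := by nlinarith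
    have ht1 : 2*d - (2*(m:ℤ)+1) ≤ 2 := by nlinarith [sq_nonneg (2*d - (2*(m:ℤ)+1) - 3)]
    have ht2 : -2 ≤ 2*d - (2*(m:ℤ)+1) := by nlinarith [sq_nonneg (2*d - (2*(m:ℤ)+1) + 3)]
    omega
  · rintro ⟨m, hm⟩
    have hm2 : n = 2*m := by omega
    have hdiv : (n^2 + 4*n) / 4 = m^2 + 2*m := by
      have h : n^2 + 4*n = 4*(m^2 + 2*m) := by subst hm2; ring
      omega
    rw [hdiv] at key
    push_cast at key
    have hm' : (n : ℤ) = 2*m := by exact_mod_cast congrArg (Nat.cast : ℕ → ℤ) hm2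
    rw [hm'] at key ⊢
    have ht : (2*d - 2*(m:ℤ))^2 ≤ 4 := by nlinarith
    have ht1 : 2*d - 2*(m:ℤ) ≤ 2 := by nlinarith [sq_nonneg (2*d - 2*(m:ℤ) - 3)]
    have ht2 : -2 ≤ 2*d - 2*(m:ℤ) := by nlinarith [sq_nonneg (2*d - 2*(m:ℤ) + 3)]
    omega
end

section
/- Let n ≥ 8 and let A be an n×n 0-1 matrix with zero trace, A² a 0-1 matrix, and ∑_{i,j} a_{ij} = ⌊(n²+4n)/4⌋ − 1 (i.e., A is extremal). Fix any row v achieving the maximum row sum Δ⁺, and let V₂ = {j : a_{vj} = 0}. Then every row u has at most one index j ∈ V₂ with a_{uj} = 1. -/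
lemma arith_le5 (N Q D P s1 s2 : ℤ) (hN : 8 ≤ N) (hD : 0 ≤ D)
    (hs1 : 0 ≤ s1) (hs2 : 0 ≤ s2)
    (hsum : s1 + s2 = N + (N - D) * D - (Q - 1))
    (hQl : N ^ 2 + 4 * N - 1 ≤ 4 * Q)
    (h5 : Q - 1 ≤ 2 * N + (N - P) * D)
    (h6 : 2 * D - s2 ≤ P) : False := by
  have hkey : Q - 1 ≤ 2 * N + (N - 2 * D + s2) * D := by
    have h := mul_le_mul_of_nonneg_right (show N - P ≤ N - 2 * D + s2 by linarith) hD
    linarith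
  have h4s2 : 4 * s2 ≤ 5 - (N - 2 * D) ^ 2 := by nlinarith
  have hb : (N - 2 * D) ^ 2 ≤ 5 := by linarith
  have hb1 : N - 2 * D ≤ 2 := by
    have h6t : 6 * (N - 2 * D) ≤ 14 := by nlinarith [sq_nonneg (N - 2 * D - 3)]
    omega
  have hb2 : -2 ≤ N - 2 * D := by
    have h6t : -14 ≤ 6 * (N - 2 * D) := by nlinarith [sq_nonneg (N - 2 * D + 3)]
    omega
  have hs2le1 : s2 ≤ 1 := by
    have : 4 * s2 ≤ 5 := by nlinarith [sq_nonneg (N - 2 * D)]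
    omega
  have hD3 : 3 ≤ D := by omega
  have hDle3 : D ≤ 3 := by
    by_contra hcon
    push_neg at hcon
    have h4 : 4 ≤ D := hcon
    nlinarith [mul_le_mul_of_nonneg_right hs2le1 hD, sq_nonneg (N - 2 * D - 2),
      mul_nonneg (show (0:ℤ) ≤ D - 4 by linarith) (show (0:ℤ) ≤ D - 3 by linarith)]
  have hDeq : D = 3 := le_antisymm hDle3 hD3
  subst hDeq
  have hN8 : N = 8 := by omega
  subst hN8
  have hs20 : s2 = 0 := by nlinarith
  nlinarith

/-- Lemma 5 (le5): if `A` is extremal (`n ≥ 8`) and `v` attains the maximum row sum,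
with `V₂ = {j : a_{vj} = 0}`, then every row `u` has at most one `j ∈ V₂` with `a_{uj} = 1`. -/
theorem stmt_7 (n : ℕ) (hn : 8 ≤ n) (A : Matrix (Fin n) (Fin n) ℤ)
    (hA : ∀ i j, A i j = 0 ∨ A i j = 1)
    (htr : ∀ i, A i i = 0)
    (hA2 : ∀ i j, (A * A) i j = 0 ∨ (A * A) i j = 1)
    (hext : ∑ i, ∑ j, A i j = (((n^2 + 4*n) / 4 : ℕ) : ℤ) - 1)
    (v : Fin n) (hv : IsGreatest (Set.range fun i => ∑ j, A i j) (∑ j, A v j)) :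
    ∀ u, (Finset.univ.filter (fun j => A v j = 0 ∧ A u j = 1)).card ≤ 1 := by
  intro u
  by_contra hcard
  push_neg at hcard
  rw [Finset.one_lt_card] at hcard
  obtain ⟨x, hx, y, hy, hxy⟩ := hcard
  simp only [Finset.mem_filter, Finset.mem_univ, true_and] at hx hy
  obtain ⟨hvx, hux⟩ := hx
  obtain ⟨hvy, huy⟩ := hy
  -- basic entry bounds
  have hA0 : ∀ i j, (0:ℤ) ≤ A i j := by
    intro i j; rcases hA i j with h | h <;> simp [h]
  have hA1 : ∀ i j, A i j ≤ 1 := by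
    intro i j; rcases hA i j with h | h <;> simp [h]
  set d : Fin n → ℤ := fun i => ∑ j, A i j with hd
  have hd0 : ∀ i, 0 ≤ d i := fun i => Finset.sum_nonneg fun j _ => hA0 i j
  have hdle : ∀ i, d i ≤ d v := fun i => hv.2 ⟨i, rfl⟩
  set Δ : ℤ := d v with hΔ
  -- row sum over out-neighborhood of w equals row sum of A² at w
  have hrow_eq : ∀ w : Fin n,
      ∑ k ∈ Finset.univ.filter (fun k => A w k = 1), d k = ∑ j, (A * A) w j := by
    intro w
    have e1 : ∑ k ∈ Finset.univ.filter (fun k => A w k = 1), d k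
        = ∑ k, A w k * d k := by
      rw [Finset.sum_filter]
      refine Finset.sum_congr rfl fun k _ => ?_
      rcases hA w k with h | h <;> simp [h]
    rw [e1]
    simp only [hd, Finset.mul_sum, Matrix.mul_apply]
    exact Finset.sum_comm
  have hP1 : ∀ w : Fin n,
      ∑ k ∈ Finset.univ.filter (fun k => A w k = 1), d k ≤ (n : ℤ) := by
    intro w
    rw [hrow_eq w]
    calc ∑ j, (A * A) w j ≤ ∑ _j : Fin n, (1:ℤ) := by
          refine Finset.sum_le_sum fun j _ => ?_
          rcases hA2 w j with h | h <;> simp [h]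
      _ = (n : ℤ) := by simp
  -- card of out-neighborhood equals degree
  have hcard_eq : ∀ w : Fin n,
      (((Finset.univ.filter (fun k => A w k = 1)).card : ℤ)) = d w := by
    intro w
    have e1 : d w = ∑ k ∈ Finset.univ.filter (fun k => A w k = 1), (1:ℤ) := by
      rw [Finset.sum_filter]
      refine Finset.sum_congr rfl fun k _ => ?_
      rcases hA w k with h | h <;> simp [h]
    rw [e1]; simp
  -- split of the total sum by V₁ / V₂
  set F1 : Finset (Fin n) := Finset.univ.filter (fun k => A v k = 1) with hF1
  set F2 : Finset (Fin n) := Finset.univ.filter (fun k => A v k = 0) with hF2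
  have hF2' : F2 = Finset.univ.filter (fun k => ¬ A v k = 1) := by
    rw [hF2]
    refine Finset.filter_congr fun k _ => ?_
    rcases hA v k with h | h <;> simp [h]
  have hsplit : ∑ k ∈ F1, d k + ∑ k ∈ F2, d k = ∑ i, d i := by
    rw [hF2']
    exact Finset.sum_filter_add_sum_filter_not _ _ _
  have hcards : F1.card + F2.card = n := by
    rw [hF2']
    simpa using Finset.card_filter_add_card_filter_not
      (s := (Finset.univ : Finset (Fin n))) (p := fun k => A v k = 1)
  have hcardF1 : (F1.card : ℤ) = Δ := hcard_eq v
  have hcardF2 : (F2.card : ℤ) = (n : ℤ) - Δ := by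
    have := congrArg (fun m : ℕ => (m : ℤ)) hcards
    push_cast at this
    linarith [hcardF1, this]
  -- total sum value
  have hE : ∑ i, d i = ((((n^2 + 4*n) / 4 : ℕ)) : ℤ) - 1 := hext
  -- V₂ slack
  have hs2sum : ∑ k ∈ F2, (Δ - d k) = ((n:ℤ) - Δ) * Δ - ∑ k ∈ F2, d k := by
    rw [Finset.sum_sub_distrib, Finset.sum_const, nsmul_eq_mul, hcardF2]
  have hs2nonneg : (0:ℤ) ≤ ∑ k ∈ F2, (Δ - d k) :=
    Finset.sum_nonneg fun k _ => by linarith [hdle k]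
  have hxF2 : x ∈ F2 := by simp [hF2, hvx]
  have hyF2 : y ∈ F2 := by simp [hF2, hvy]
  have hpairle : (Δ - d x) + (Δ - d y) ≤ ∑ k ∈ F2, (Δ - d k) := by
    have hpair : ∑ k ∈ ({x, y} : Finset (Fin n)), (Δ - d k) = (Δ - d x) + (Δ - d y) :=
      Finset.sum_pair hxy
    rw [← hpair]
    refine Finset.sum_le_sum_of_subset_of_nonneg ?_ fun k _ _ => by linarith [hdle k]
    intro k hk
    rcases Finset.mem_insert.mp hk with h | h
    · subst h; exact hxF2
    · rw [Finset.mem_singleton] at h; subst h; exact hyF2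
  -- supports of rows x and y are disjoint
  set Nx : Finset (Fin n) := Finset.univ.filter (fun k => A x k = 1) with hNx
  set Ny : Finset (Fin n) := Finset.univ.filter (fun k => A y k = 1) with hNy
  have hdisj : Disjoint Nx Ny := by
    rw [Finset.disjoint_left]
    intro k hkx hky
    rw [hNx, Finset.mem_filter] at hkx
    rw [hNy, Finset.mem_filter] at hky
    have hsub : ∑ m ∈ ({x, y} : Finset (Fin n)), A u m * A m k ≤ ∑ m, A u m * A m k := by
      refine Finset.sum_le_sum_of_subset_of_nonneg (Finset.subset_univ _)
        fun m _ _ => mul_nonneg (hA0 u m) (hA0 m k)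
    rw [Finset.sum_pair hxy, hux, huy, hkx.2, hky.2] at hsub
    have hm : (A * A) u k = ∑ m, A u m * A m k := Matrix.mul_apply
    rcases hA2 u k with h | h <;> rw [hm] at h <;> rw [h] at hsub <;> norm_num at hsub
  -- E upper bound via the partition Nx ∪ Ny / rest
  have hcompl : ∑ k ∈ Nx ∪ Ny, d k + ∑ k ∈ (Nx ∪ Ny)ᶜ, d k = ∑ i, d i :=
    Finset.sum_add_sum_compl _ _
  have hU : ∑ k ∈ Nx ∪ Ny, d k = ∑ k ∈ Nx, d k + ∑ k ∈ Ny, d k :=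
    Finset.sum_union hdisj
  have hcardU : ((Nx ∪ Ny).card : ℤ) = d x + d y := by
    rw [Finset.card_union_of_disjoint hdisj]
    push_cast
    rw [hcard_eq x, hcard_eq y]
  have hcardUle : (Nx ∪ Ny).card ≤ n := by
    simpa using Finset.card_le_univ (Nx ∪ Ny)
  have hcardcompl : (((Nx ∪ Ny)ᶜ).card : ℤ) = (n:ℤ) - (d x + d y) := by
    rw [Finset.card_compl, Fintype.card_fin, Nat.cast_sub hcardUle, hcardU]
  have hRest : ∑ k ∈ (Nx ∪ Ny)ᶜ, d k ≤ ((n:ℤ) - (d x + d y)) * Δ := by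
    calc ∑ k ∈ (Nx ∪ Ny)ᶜ, d k ≤ ∑ _k ∈ (Nx ∪ Ny)ᶜ, Δ :=
          Finset.sum_le_sum fun k _ => hdle k
      _ = (((Nx ∪ Ny)ᶜ).card : ℤ) * Δ := by rw [Finset.sum_const, nsmul_eq_mul]
      _ = ((n:ℤ) - (d x + d y)) * Δ := by rw [hcardcompl]
  -- Q bounds
  have hQnat : n^2 + 4*n ≤ 4 * ((n^2 + 4*n) / 4) + 1 ∧ 4 * ((n^2 + 4*n) / 4) ≤ n^2 + 4*n := by
    rcases Nat.even_or_odd n with ⟨k, hk⟩ | ⟨k, hk⟩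
    · have h1 : n^2 + 4*n = 4 * (k*k + 2*k) := by subst hk; ring
      omega
    · have h1 : n^2 + 4*n = 4 * (k*k + 3*k + 1) + 1 := by subst hk; ring
      omega
  -- assemble and conclude by the arithmetic lemma
  refine arith_le5 (n:ℤ) ((((n^2 + 4*n) / 4 : ℕ)) : ℤ) Δ (d x + d y)
    ((n:ℤ) - ∑ k ∈ F1, d k) (((n:ℤ) - Δ) * Δ - ∑ k ∈ F2, d k)
    (by exact_mod_cast hn) (hd0 v) ?_ ?_ ?_ ?_ ?_ ?_
  · linarith [hP1 v]
  · linarith [hs2nonneg, hs2sum]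
  · have := hE; rw [← hsplit] at this; linarith
  · have h1 : ((n:ℤ)^2 + 4*(n:ℤ)) ≤ 4 * ((((n^2 + 4*n) / 4 : ℕ)) : ℤ) + 1 := by
      exact_mod_cast hQnat.1
    linarith
  · have := hE; rw [← hcompl, hU] at this
    linarith [hP1 x, hP1 y, hRest]
  · linarith [hpairle, hs2sum]
end

section
/- Let n ≥ 8 and let A be an extremal n×n 0-1 matrix (zero trace, A² a 0-1 matrix, with ⌊(n²+4n)/4⌋ − 1 ones) whose maximum row sum Δ⁺ is at least its maximum column sum Δ⁻. Then Δ⁺ = ⌈(n+1)/2⌉. -/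
/-!
Write `rₖ`, `cₖ` for the row and column sums of `A` and `m` for its number of ones. As `A²` is
a 0-1 matrix, every row of `A²` has at most `n` ones; a row `v` with `r_v = Δ⁺` therefore
gives `m ≤ n + (n - Δ⁺) Δ⁺`, which pins `Δ⁺` (and likewise `Δ⁻`) to within one of `n / 2`.
Expanding `∑ₖ (Δ⁺ - rₖ)(Δ⁻ - cₖ) ≥ 0` against `∑ₖ rₖ cₖ = ∑ (A²)ᵢⱼ ≤ n²` excludes every
smaller value of `Δ⁺ ≥ Δ⁻` except in two borderline cases: `n = 9` with `Δ⁺ = Δ⁻ = 4`, and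
`n = 2h` with `Δ⁺ = Δ⁻ = h`. In the second one, every row of sum `h` points to every row of
sum at most `h - 2`, so at most one arc from any vertex ends in a row of sum `h`; this forces
`h` or `h - 1` rows and columns of sum `h`, and counting walks of length two rules out each
combination.
-/

namespace ZeroOneSquare

open Finset
open scoped Matrix

variable {ι : Type*}

def IsZeroOne (A : Matrix ι ι ℤ) : Prop := ∀ i j, A i j = 0 ∨ A i j = 1

namespace IsZeroOne

variable {A : Matrix ι ι ℤ} (hA : IsZeroOne A)
include hA

lemma nonneg (i j : ι) : 0 ≤ A i j := by rcases hA i j with h | h <;> simp [h]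

lemma le_one (i j : ι) : A i j ≤ 1 := by rcases hA i j with h | h <;> simp [h]

lemma transpose : IsZeroOne Aᵀ := fun i j => hA j i

lemma sum_eq_card_filter (i : ι) (s : Finset ι) :
    ∑ j ∈ s, A i j = #{j ∈ s | A i j = 1} := by
  rw [natCast_card_filter]
  exact sum_congr rfl fun j _ => by rcases hA i j with h | h <;> simp [h]

lemma sum_le_card (i : ι) (s : Finset ι) : ∑ j ∈ s, A i j ≤ #s := by
  rw [hA.sum_eq_card_filter]; exact_mod_cast card_filter_le _ _

end IsZeroOne

variable [Fintype ι]

def rowSum (A : Matrix ι ι ℤ) (i : ι) : ℤ := ∑ j, A i j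

namespace IsZeroOne

variable {A : Matrix ι ι ℤ} (hA : IsZeroOne A)
include hA

lemma rowSum_le_card (i : ι) : rowSum A i ≤ Fintype.card ι := by
  simpa [rowSum] using hA.sum_le_card i univ

lemma eq_one_of_rowSum_eq_card {i : ι} (hi : rowSum A i = Fintype.card ι) (j : ι) :
    A i j = 1 := by
  have hzero : ∑ l, (1 - A i l) = 0 := by simp only [rowSum] at hi; simp [sum_sub_distrib, hi]
  have := (sum_eq_zero_iff_of_nonneg fun l _ => sub_nonneg.2 (hA.le_one i l)).1 hzero j
    (mem_univ j)
  linarith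

end IsZeroOne

lemma isZeroOne_transpose_mul_transpose {A : Matrix ι ι ℤ} (hA2 : IsZeroOne (A * A)) :
    IsZeroOne (Aᵀ * Aᵀ) := by
  rw [← Matrix.transpose_mul]; exact hA2.transpose

lemma sum_rowSum_transpose (A : Matrix ι ι ℤ) : ∑ j, rowSum Aᵀ j = ∑ i, rowSum A i :=
  sum_comm

lemma sum_mul_rowSum (A : Matrix ι ι ℤ) (u : ι) :
    ∑ k, A u k * rowSum A k = rowSum (A * A) u := by
  simp only [rowSum, Matrix.mul_apply, mul_sum]
  exact sum_comm

lemma sum_rowSum_mul_rowSum_transpose (A : Matrix ι ι ℤ) :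
    ∑ k, rowSum A k * rowSum Aᵀ k = ∑ i, rowSum (A * A) i := by
  symm
  calc ∑ i, rowSum (A * A) i = ∑ i, ∑ k, ∑ j, A i k * A k j := by
        simp only [rowSum, Matrix.mul_apply]; exact sum_congr rfl fun i _ => sum_comm
    _ = ∑ k, (∑ i, A i k) * ∑ j, A k j := by simp only [sum_mul_sum]; exact sum_comm
    _ = ∑ k, rowSum A k * rowSum Aᵀ k := sum_congr rfl fun k _ => mul_comm _ _

/-- Expanding `∑ₖ (d - rₖ)(e - cₖ) ≥ 0`. -/
lemma total_mul_add_sub_le_sum_rowSum_mul_self {A : Matrix ι ι ℤ} {d e : ℤ}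
    (hr : ∀ i, rowSum A i ≤ d) (hc : ∀ j, rowSum Aᵀ j ≤ e) :
    (∑ i, rowSum A i) * (d + e) - Fintype.card ι * d * e ≤ ∑ i, rowSum (A * A) i := by
  have hprod : 0 ≤ ∑ k, (d - rowSum A k) * (e - rowSum Aᵀ k) :=
    sum_nonneg fun k _ => mul_nonneg (sub_nonneg.2 (hr k)) (sub_nonneg.2 (hc k))
  have hexpand : ∑ k, (d - rowSum A k) * (e - rowSum Aᵀ k) =
      Fintype.card ι * d * e - e * ∑ k, rowSum A k - d * ∑ k, rowSum Aᵀ k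
        + ∑ k, rowSum A k * rowSum Aᵀ k := by
    simp only [sub_mul, mul_sub, sum_sub_distrib, mul_sum, sum_const,
      card_univ, nsmul_eq_mul]
    ring_nf
  rw [sum_rowSum_transpose, sum_rowSum_mul_rowSum_transpose] at hexpand
  linarith

lemma sum_rowSum_mul_self_le {A : Matrix ι ι ℤ} (hA2 : IsZeroOne (A * A)) :
    ∑ i, rowSum (A * A) i ≤ (Fintype.card ι : ℤ) ^ 2 := by
  calc ∑ i, rowSum (A * A) i ≤ ∑ _i : ι, (Fintype.card ι : ℤ) :=
        sum_le_sum fun i _ => hA2.rowSum_le_card i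
    _ = (Fintype.card ι : ℤ) ^ 2 := by simp [sq]

/-- The out-neighbours of a row `v` of maximal sum `d` carry total row sum at most `n` (a row of
`A²`), and each of the other `n - d` rows has sum at most `d`. -/
lemma sum_rowSum_le_of_isGreatest {A : Matrix ι ι ℤ} (hA : IsZeroOne A)
    (hA2 : IsZeroOne (A * A)) {d : ℤ} (hd : IsGreatest (Set.range (rowSum A)) d) :
    ∑ i, rowSum A i ≤ Fintype.card ι + (Fintype.card ι - d) * d := by
  obtain ⟨⟨v, hv⟩, hr⟩ := hd
  have hsplit : ∑ k, rowSum A k = ∑ k, A v k * rowSum A k + ∑ k, (1 - A v k) * rowSum A k := by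
    rw [← sum_add_distrib]; exact sum_congr rfl fun k _ => by ring
  have hout : ∑ k, A v k * rowSum A k ≤ Fintype.card ι := by
    rw [sum_mul_rowSum]; exact hA2.rowSum_le_card v
  have hrest : ∑ k, (1 - A v k) * rowSum A k ≤ (Fintype.card ι - d) * d := by
    calc ∑ k, (1 - A v k) * rowSum A k ≤ ∑ k, (1 - A v k) * d :=
          sum_le_sum fun k _ =>
            mul_le_mul_of_nonneg_left (hr ⟨k, rfl⟩) (sub_nonneg.2 (hA.le_one v k))
      _ = (Fintype.card ι - d) * d := by
          rw [← sum_mul, sum_sub_distrib, ← hv]; simp [rowSum]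
  linarith

lemma eq_of_two_walks {A : Matrix ι ι ℤ} (hA : IsZeroOne A) (hA2 : IsZeroOne (A * A))
    {i j a b : ι} (hia : A i a = 1) (haj : A a j = 1) (hib : A i b = 1) (hbj : A b j = 1) :
    a = b := by
  classical
  by_contra hab
  have hpair : ∑ k ∈ {a, b}, A i k * A k j ≤ (A * A) i j := by
    rw [Matrix.mul_apply]
    exact sum_le_sum_of_subset_of_nonneg (subset_univ _)
      fun k _ _ => mul_nonneg (hA.nonneg i k) (hA.nonneg k j)
  rw [sum_pair hab, hia, haj, hib, hbj] at hpair
  linarith [hA2.le_one i j]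

/-- With `n = 9` and all row and column sums at most `4`, the counting bound leaves at most one
zero entry in `A²`. Writing `zₖ` for the zeros in row `k` of `A²`, the identity
`9 - zₖ = ∑ₗ Aₖₗ rₗ ≤ 4 rₖ` forces `rₖ ≥ 3 - zₖ`, so a row of sum `4` would start at least
`12 - ∑ zₗ ≥ 11 > 9` walks of length two. -/
lemma false_of_card_eq_nine {A : Matrix ι ι ℤ} (hcard : Fintype.card ι = 9)
    (hA : IsZeroOne A) (hA2 : IsZeroOne (A * A)) (htotal : ∑ i, rowSum A i = 28)
    (hr : ∀ i, rowSum A i ≤ 4) (hc : ∀ j, rowSum Aᵀ j ≤ 4) {v : ι} (hv : rowSum A v = 4) :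
    False := by
  set z : ι → ℤ := fun k => 9 - rowSum (A * A) k with hz
  have hz_nonneg : ∀ k, 0 ≤ z k := fun k => by
    have := hA2.rowSum_le_card k; rw [hcard] at this; simp only [hz]; omega
  have hz_sum : ∑ k, z k ≤ 1 := by
    have := total_mul_add_sub_le_sum_rowSum_mul_self hr hc
    rw [htotal, hcard] at this
    simp only [hz, sum_sub_distrib, sum_const, card_univ, hcard]
    norm_num at this ⊢
    linarith
  have hz_le : ∀ k, z k ≤ 1 := fun k =>
    (single_le_sum (fun l _ => hz_nonneg l) (mem_univ k)).trans hz_sum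
  have hrow : ∀ k, 3 - z k ≤ rowSum A k := fun k => by
    have hW : ∑ l, A k l * rowSum A l ≤ 4 * rowSum A k := by
      calc ∑ l, A k l * rowSum A l ≤ ∑ l, A k l * 4 :=
            sum_le_sum fun l _ => mul_le_mul_of_nonneg_left (hr l) (hA.nonneg k l)
        _ = 4 * rowSum A k := by rw [← sum_mul, mul_comm]; rfl
    rw [sum_mul_rowSum] at hW
    have h1 := hz_le k
    have h0 := hz_nonneg k
    simp only [hz] at h0 h1 ⊢
    omega
  have hWv : 11 ≤ ∑ l, A v l * rowSum A l := by
    calc (11 : ℤ) ≤ 3 * rowSum A v - ∑ l, z l := by rw [hv]; linarith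
      _ ≤ 3 * rowSum A v - ∑ l, A v l * z l := by
          gcongr with l
          exact mul_le_of_le_one_left (hz_nonneg l) (hA.le_one v l)
      _ = ∑ l, A v l * (3 - z l) := by
          simp only [mul_sub, sum_sub_distrib, ← sum_mul, rowSum]; ring
      _ ≤ ∑ l, A v l * rowSum A l :=
          sum_le_sum fun l _ => mul_le_mul_of_nonneg_left (hrow l) (hA.nonneg v l)
  rw [sum_mul_rowSum] at hWv
  have := hA2.rowSum_le_card v
  rw [hcard] at this
  omega

section Classes

variable (A : Matrix ι ι ℤ) (h : ℤ)

def fullRows : Finset ι := {k | rowSum A k = h}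

def nearRows : Finset ι := {k | rowSum A k = h - 1}

def lowRows : Finset ι := {k | rowSum A k ≤ h - 2}

variable {A h} {k : ι}

@[simp] lemma mem_fullRows : k ∈ fullRows A h ↔ rowSum A k = h := by simp [fullRows]

@[simp] lemma mem_nearRows : k ∈ nearRows A h ↔ rowSum A k = h - 1 := by simp [nearRows]

@[simp] lemma mem_lowRows : k ∈ lowRows A h ↔ rowSum A k ≤ h - 2 := by simp [lowRows]

lemma sum_full_mul_rowSum (i : ι) :
    ∑ k ∈ fullRows A h, A i k * rowSum A k = h * ∑ k ∈ fullRows A h, A i k := by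
  rw [mul_sum]; exact sum_congr rfl fun k hk => by rw [mem_fullRows.1 hk, mul_comm]

lemma sum_near_mul_rowSum (i : ι) :
    ∑ k ∈ nearRows A h, A i k * rowSum A k = (h - 1) * ∑ k ∈ nearRows A h, A i k := by
  rw [mul_sum]; exact sum_congr rfl fun k hk => by rw [mem_nearRows.1 hk, mul_comm]

end Classes

structure IsEvenCritical (A : Matrix ι ι ℤ) (h : ℤ) : Prop where
  card_eq : (Fintype.card ι : ℤ) = 2 * h
  four_le : 4 ≤ h
  zeroOne : IsZeroOne A
  diag_eq_zero : ∀ i, A i i = 0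
  sq_zeroOne : IsZeroOne (A * A)
  sum_rowSum : ∑ i, rowSum A i = h ^ 2 + 2 * h - 1
  rowSum_le : ∀ i, rowSum A i ≤ h
  colSum_le : ∀ j, rowSum Aᵀ j ≤ h
  exists_rowSum_eq : ∃ i, rowSum A i = h
  exists_colSum_eq : ∃ j, rowSum Aᵀ j = h

namespace IsEvenCritical

variable {A : Matrix ι ι ℤ} {h : ℤ} (H : IsEvenCritical A h)
include H

lemma transpose : IsEvenCritical Aᵀ h where
  card_eq := H.card_eq
  four_le := H.four_le
  zeroOne := H.zeroOne.transpose
  diag_eq_zero := H.diag_eq_zero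
  sq_zeroOne := isZeroOne_transpose_mul_transpose H.sq_zeroOne
  sum_rowSum := by rw [sum_rowSum_transpose, H.sum_rowSum]
  rowSum_le := H.colSum_le
  colSum_le := H.rowSum_le
  exists_rowSum_eq := H.exists_colSum_eq
  exists_colSum_eq := H.exists_rowSum_eq

lemma sum_univ_eq_full_near_low (f : ι → ℤ) :
    ∑ k, f k = ∑ k ∈ fullRows A h, f k + ∑ k ∈ nearRows A h, f k + ∑ k ∈ lowRows A h, f k := by
  simp only [fullRows, nearRows, lowRows, sum_filter, ← sum_add_distrib]
  refine sum_congr rfl fun k _ => ?_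
  have := H.rowSum_le k
  split_ifs <;> omega

lemma card_full_add_card_near_add_card_low :
    (#(fullRows A h) : ℤ) + #(nearRows A h) + #(lowRows A h) = 2 * h := by
  simpa [← H.card_eq] using (H.sum_univ_eq_full_near_low fun _ => 1).symm

lemma sum_sub_rowSum : ∑ k, (h - rowSum A k) = (h - 1) ^ 2 := by
  rw [sum_sub_distrib, H.sum_rowSum]
  simp [H.card_eq]
  ring

lemma sum_low_sub_rowSum :
    ∑ k ∈ lowRows A h, (h - rowSum A k) = (h - 1) ^ 2 - #(nearRows A h) := by
  have hfull : ∑ k ∈ fullRows A h, (h - rowSum A k) = 0 :=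
    sum_eq_zero fun k hk => by simp [(mem_fullRows.1 hk)]
  have hnear : ∑ k ∈ nearRows A h, (h - rowSum A k) = #(nearRows A h) := by
    rw [sum_congr rfl fun k hk => by rw [mem_nearRows.1 hk]]; simp
  linarith [H.sum_univ_eq_full_near_low fun k => h - rowSum A k, H.sum_sub_rowSum]

/-- Only a deficit of `1` fits outside the out-neighbourhood of a full row: since
`(A²)ᵤ` has at most `2h` ones, `∑ₗ (1 - Aᵤₗ)(h - rₗ) = (h - 1)² - h² + rowSum (A²) u ≤ 1`. -/
lemma adj_of_mem_full_of_mem_low {u k : ι} (hu : u ∈ fullRows A h) (hk : k ∈ lowRows A h) :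
    A u k = 1 := by
  have hexpand : ∑ l, (1 - A u l) * (h - rowSum A l) =
      ∑ l, (h - rowSum A l) - h * rowSum A u + ∑ l, A u l * rowSum A l := by
    simp only [sub_mul, one_mul, sum_sub_distrib, mul_sub, ← sum_mul, rowSum]; ring
  have hle : ∑ l, (1 - A u l) * (h - rowSum A l) ≤ 1 := by
    have := H.sq_zeroOne.rowSum_le_card u
    rw [hexpand, H.sum_sub_rowSum, mem_fullRows.1 hu, sum_mul_rowSum]
    rw [H.card_eq] at this
    linarith
  have hnonneg : ∀ l ∈ univ, 0 ≤ (1 - A u l) * (h - rowSum A l) := fun l _ =>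
    mul_nonneg (sub_nonneg.2 (H.zeroOne.le_one u l)) (sub_nonneg.2 (H.rowSum_le l))
  have hterm := (single_le_sum hnonneg (mem_univ k)).trans hle
  rcases H.zeroOne u k with h0 | h1
  · rw [h0] at hterm; linarith [mem_lowRows.1 hk]
  · exact h1

lemma exists_mem_low : ∃ k, k ∈ lowRows A h := by
  by_contra! hnone
  have : ∑ k, (h - rowSum A k) ≤ ∑ _k : ι, 1 := sum_le_sum fun k _ => by
    have := H.rowSum_le k; have := hnone k; simp only [mem_lowRows] at this; omega
  rw [H.sum_sub_rowSum] at this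
  simp [H.card_eq] at this
  nlinarith [H.four_le]

lemma eq_of_adj_of_adj {j u₁ u₂ : ι} (hu₁ : u₁ ∈ fullRows A h) (hu₂ : u₂ ∈ fullRows A h)
    (h₁ : A j u₁ = 1) (h₂ : A j u₂ = 1) : u₁ = u₂ := by
  obtain ⟨k, hk⟩ := H.exists_mem_low
  exact eq_of_two_walks H.zeroOne H.sq_zeroOne h₁
    (H.adj_of_mem_full_of_mem_low hu₁ hk) h₂ (H.adj_of_mem_full_of_mem_low hu₂ hk)

lemma sum_full_le_one (j : ι) : ∑ u ∈ fullRows A h, A j u ≤ 1 := by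
  rw [H.zeroOne.sum_eq_card_filter]
  exact_mod_cast card_le_one.2 fun a ha b hb => by
    simp only [mem_filter] at ha hb
    exact H.eq_of_adj_of_adj ha.1 hb.1 ha.2 hb.2

lemma card_full_le : (#(fullRows A h) : ℤ) ≤ h := by
  obtain ⟨k, hk⟩ := H.exists_mem_low
  calc (#(fullRows A h) : ℤ) = ∑ u ∈ fullRows A h, A u k := by
        rw [sum_congr rfl fun u hu => H.adj_of_mem_full_of_mem_low hu hk]; simp
    _ ≤ rowSum Aᵀ k := sum_le_sum_of_subset_of_nonneg (subset_univ _)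
        fun u _ _ => H.zeroOne.nonneg u k
    _ ≤ h := H.colSum_le k

lemma sum_full_add_sum_near_add_card_low {u : ι} (hu : u ∈ fullRows A h) :
    ∑ k ∈ fullRows A h, A u k + ∑ k ∈ nearRows A h, A u k + #(lowRows A h) = h := by
  have hlow : ∑ k ∈ lowRows A h, A u k = #(lowRows A h) := by
    rw [sum_congr rfl fun k hk => H.adj_of_mem_full_of_mem_low hu hk]; simp
  rw [← hlow, ← H.sum_univ_eq_full_near_low, ← mem_fullRows.1 hu, rowSum]

lemma rowSum_sq_of_mem_full {u : ι} (hu : u ∈ fullRows A h) :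
    rowSum (A * A) u = 2 * h - 1 + #(nearRows A h) - ∑ k ∈ nearRows A h, A u k := by
  have hlow : ∑ k ∈ lowRows A h, A u k * rowSum A k =
      h * #(lowRows A h) - ((h - 1) ^ 2 - #(nearRows A h)) := by
    rw [← H.sum_low_sub_rowSum, sum_sub_distrib, sum_const, nsmul_eq_mul, mul_comm,
      sub_sub_cancel]
    exact sum_congr rfl fun k hk => by rw [H.adj_of_mem_full_of_mem_low hu hk, one_mul]
  rw [← sum_mul_rowSum, H.sum_univ_eq_full_near_low, sum_full_mul_rowSum, sum_near_mul_rowSum, hlow]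
  linear_combination h * H.sum_full_add_sum_near_add_card_low hu

lemma card_full_eq_of_mem_full {u : ι} (hu : u ∈ fullRows A h) :
    (#(fullRows A h) : ℤ) =
      h + ∑ k ∈ fullRows A h, A u k + ∑ k ∈ nearRows A h, A u k - #(nearRows A h) := by
  linear_combination H.card_full_add_card_near_add_card_low -
    H.sum_full_add_sum_near_add_card_low hu

lemma card_near_sub_one_le_sum {u : ι} (hu : u ∈ fullRows A h) :
    (#(nearRows A h) : ℤ) - 1 ≤ ∑ k ∈ nearRows A h, A u k := by
  have := H.sq_zeroOne.rowSum_le_card u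
  rw [H.rowSum_sq_of_mem_full hu, H.card_eq] at this
  linarith

lemma card_full_eq : (#(fullRows A h) : ℤ) = h ∨ #(fullRows A h) = h - 1 := by
  obtain ⟨u, hu⟩ := H.exists_rowSum_eq
  rw [← mem_fullRows] at hu
  have := H.card_full_eq_of_mem_full hu
  have := H.card_near_sub_one_le_sum hu
  have := H.card_full_le
  have : 0 ≤ ∑ k ∈ fullRows A h, A u k := sum_nonneg fun k _ => H.zeroOne.nonneg u k
  omega

lemma sum_two_mul_sub_rowSum_sq_le : ∑ k, (2 * h - rowSum (A * A) k) ≤ 2 * h := by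
  have := total_mul_add_sub_le_sum_rowSum_mul_self H.rowSum_le H.colSum_le
  rw [H.sum_rowSum, H.card_eq] at this
  rw [sum_sub_distrib]
  simp only [sum_const, card_univ, nsmul_eq_mul, H.card_eq]
  nlinarith

section CardFullEq

variable (hP : (#(fullRows A h) : ℤ) = h)
include hP

lemma adj_eq_zero_of_mem_low {i k : ι} (hk : k ∈ lowRows A h) (hi : i ∉ fullRows A h) :
    A i k = 0 := by
  classical
  have hin : ∑ l ∈ fullRows A h, A l k = h := by
    rw [sum_congr rfl fun l hl => H.adj_of_mem_full_of_mem_low hl hk]; simp [hP]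
  have hout : ∑ l ∈ (fullRows A h)ᶜ, A l k = 0 := by
    have hsplit := sum_add_sum_compl (fullRows A h) fun l => A l k
    have : 0 ≤ ∑ l ∈ (fullRows A h)ᶜ, A l k := sum_nonneg fun l _ => H.zeroOne.nonneg l k
    linarith [H.colSum_le k, show rowSum Aᵀ k = ∑ l, A l k from rfl]
  exact (sum_eq_zero_iff_of_nonneg fun l _ => H.zeroOne.nonneg l k).1 hout i (mem_compl.2 hi)

lemma sum_low_mul_eq_zero {k : ι} (hk : k ∈ lowRows A h) (f : ι → ℤ) :
    ∑ l ∈ lowRows A h, A k l * f l = 0 :=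
  sum_eq_zero fun l hl => by
    rw [H.adj_eq_zero_of_mem_low hP hl (by simp only [mem_lowRows, mem_fullRows] at hk ⊢; omega),
      zero_mul]

lemma rowSum_eq_of_mem_low {k : ι} (hk : k ∈ lowRows A h) :
    rowSum A k = ∑ l ∈ fullRows A h, A k l + ∑ l ∈ nearRows A h, A k l := by
  have := H.sum_low_mul_eq_zero hP hk 1
  simp only [Pi.one_apply, mul_one] at this
  rw [rowSum, H.sum_univ_eq_full_near_low, this, add_zero]

lemma rowSum_sq_le_of_mem_low {k : ι} (hk : k ∈ lowRows A h) :
    rowSum (A * A) k ≤ (h - 1) * rowSum A k + 1 := by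
  rw [← sum_mul_rowSum, H.sum_univ_eq_full_near_low, sum_full_mul_rowSum, sum_near_mul_rowSum,
    H.sum_low_mul_eq_zero hP hk, H.rowSum_eq_of_mem_low hP hk]
  linarith [H.sum_full_le_one k]

lemma rowSum_le_of_mem_low {k : ι} (hk : k ∈ lowRows A h) :
    rowSum A k ≤ 1 + #(nearRows A h) := by
  rw [H.rowSum_eq_of_mem_low hP hk]
  linarith [H.sum_full_le_one k, H.zeroOne.sum_le_card k (nearRows A h)]

/-- Every low row `k` points only to full and near rows, and to at most one full row, so row `k`
of `A²` has at most `(h - 1) rₖ + 1` ones. Summed over the low rows, this leaves more zeros in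
`A²` than the budget `2h` allows. -/
lemma false_of_card_full_eq : False := by
  set q : ℤ := ((#(lowRows A h) : ℕ) : ℤ)
  set w : ℤ := ((#(nearRows A h) : ℕ) : ℤ)
  set R := ∑ k ∈ lowRows A h, rowSum A k
  have hR : R = h * q - ((h - 1) ^ 2 - w) := by
    rw [← H.sum_low_sub_rowSum, sum_sub_distrib]; simp [R, q, mul_comm]
  have hR_le : R ≤ q * (1 + w) := by
    calc R ≤ ∑ _k ∈ lowRows A h, (1 + w) := sum_le_sum fun k hk => H.rowSum_le_of_mem_low hP hk
      _ = q * (1 + w) := by simp [q]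
  have hbudget : (2 * h - 1) * q - (h - 1) * R ≤ 2 * h := by
    calc (2 * h - 1) * q - (h - 1) * R
        = ∑ k ∈ lowRows A h, (2 * h - ((h - 1) * rowSum A k + 1)) := by
          simp [sum_sub_distrib, sum_add_distrib, ← mul_sum, R, q]; ring
      _ ≤ ∑ k ∈ lowRows A h, (2 * h - rowSum (A * A) k) :=
          sum_le_sum fun k hk => by linarith [H.rowSum_sq_le_of_mem_low hP hk]
      _ ≤ ∑ k, (2 * h - rowSum (A * A) k) :=
          sum_le_sum_of_subset_of_nonneg (subset_univ _) fun k _ _ => by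
            linarith [H.sq_zeroOne.rowSum_le_card k, H.card_eq]
      _ ≤ 2 * h := H.sum_two_mul_sub_rowSum_sq_le
  have hw : w = h - q := by linarith [H.card_full_add_card_near_add_card_low]
  have hw0 : 0 ≤ w := by positivity
  have h4 := H.four_le
  rw [hw] at hR hR_le
  rcases (show q = h ∨ q ≤ h - 1 by omega) with hqh | hqh
  · rw [hqh] at hR hR_le; nlinarith
  · rw [hR] at hbudget
    nlinarith [mul_nonneg (sub_nonneg.2 hqh) (by nlinarith : (0:ℤ) ≤ h ^ 2 - 4 * h + 2)]

end CardFullEq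

section CardFullEqSubOne

variable (hP : (#(fullRows A h) : ℤ) = h - 1)
include hP

lemma sum_full_eq_zero {u : ι} (hu : u ∈ fullRows A h) : ∑ k ∈ fullRows A h, A u k = 0 := by
  have := H.card_full_eq_of_mem_full hu
  have := H.card_near_sub_one_le_sum hu
  have : 0 ≤ ∑ k ∈ fullRows A h, A u k := sum_nonneg fun k _ => H.zeroOne.nonneg u k
  omega

lemma sum_near_eq {u : ι} (hu : u ∈ fullRows A h) :
    ∑ k ∈ nearRows A h, A u k = #(nearRows A h) - 1 := by
  have := H.card_full_eq_of_mem_full hu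
  have := H.sum_full_eq_zero hP hu
  omega

lemma adj_eq_zero_of_mem_full {u k : ι} (hu : u ∈ fullRows A h) (hk : k ∈ fullRows A h) :
    A u k = 0 :=
  (sum_eq_zero_iff_of_nonneg fun l _ => H.zeroOne.nonneg u l).1 (H.sum_full_eq_zero hP hu) k hk

lemma mul_apply_eq_one {u : ι} (hu : u ∈ fullRows A h) (j : ι) : (A * A) u j = 1 := by
  refine H.sq_zeroOne.eq_one_of_rowSum_eq_card ?_ j
  rw [H.rowSum_sq_of_mem_full hu, H.sum_near_eq hP hu, H.card_eq]
  ring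

/-- Fix a full row `u₀`. An in-neighbour of `u` is either an out-neighbour of `u₀` (at most one,
as `(A²)ᵤ₀ᵤ ≤ 1`) or the one near row that `u₀` misses: `u₀` points to every low row, and no full
row points to a full row. -/
lemma colSum_le_two {u : ι} (hu : u ∈ fullRows A h) : rowSum Aᵀ u ≤ 2 := by
  obtain ⟨u₀, hu₀⟩ := H.exists_rowSum_eq
  rw [← mem_fullRows] at hu₀
  have hsplit : rowSum Aᵀ u = ∑ k, A u₀ k * A k u + ∑ k, (1 - A u₀ k) * A k u := by
    rw [← sum_add_distrib]; exact sum_congr rfl fun k _ => by simp; ring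
  have hout : ∑ k, A u₀ k * A k u = 1 := by
    rw [← Matrix.mul_apply]; exact H.mul_apply_eq_one hP hu₀ u
  have hfull : ∑ k ∈ fullRows A h, (1 - A u₀ k) * A k u = 0 :=
    sum_eq_zero fun k hk => by rw [H.adj_eq_zero_of_mem_full hP hk hu, mul_zero]
  have hnear : ∑ k ∈ nearRows A h, (1 - A u₀ k) * A k u ≤ 1 := by
    calc ∑ k ∈ nearRows A h, (1 - A u₀ k) * A k u ≤ ∑ k ∈ nearRows A h, (1 - A u₀ k) :=
          sum_le_sum fun k _ =>
            mul_le_of_le_one_right (sub_nonneg.2 (H.zeroOne.le_one u₀ k)) (H.zeroOne.le_one k u)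
      _ = 1 := by rw [sum_sub_distrib, H.sum_near_eq hP hu₀]; simp
  have hlow : ∑ k ∈ lowRows A h, (1 - A u₀ k) * A k u = 0 :=
    sum_eq_zero fun k hk => by rw [H.adj_of_mem_full_of_mem_low hu₀ hk, sub_self, zero_mul]
  linarith [H.sum_univ_eq_full_near_low fun k => (1 - A u₀ k) * A k u]

lemma sum_near_mul_add_sum_low {u : ι} (hu : u ∈ fullRows A h) (j : ι) :
    ∑ k ∈ nearRows A h, A u k * A k j + ∑ k ∈ lowRows A h, A k j = 1 := by
  have hfull : ∑ k ∈ fullRows A h, A u k * A k j = 0 :=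
    sum_eq_zero fun k hk => by rw [H.adj_eq_zero_of_mem_full hP hu hk, zero_mul]
  have hlow : ∑ k ∈ lowRows A h, A u k * A k j = ∑ k ∈ lowRows A h, A k j :=
    sum_congr rfl fun k hk => by rw [H.adj_of_mem_full_of_mem_low hu hk, one_mul]
  rw [← H.mul_apply_eq_one hP hu j, Matrix.mul_apply, H.sum_univ_eq_full_near_low, hfull, hlow,
    zero_add]

lemma one_le_sum_near_add_sum_low (j : ι) :
    1 ≤ ∑ k ∈ nearRows A h, A k j + ∑ k ∈ lowRows A h, A k j := by
  obtain ⟨u, hu⟩ := H.exists_rowSum_eq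
  rw [← mem_fullRows] at hu
  have : ∑ k ∈ nearRows A h, A u k * A k j ≤ ∑ k ∈ nearRows A h, A k j :=
    sum_le_sum fun k _ => mul_le_of_le_one_left (H.zeroOne.nonneg k j) (H.zeroOne.le_one u k)
  linarith [H.sum_near_mul_add_sum_low hP hu j]

/-- A full row `u` that misses the near row `z` points to every other near row and every low row,
so each in-neighbour of `z` among them lies on the unique walk of length two from `u` to `z`. -/
lemma sum_near_add_sum_low_le_one {u z : ι} (hu : u ∈ fullRows A h) (hz : z ∈ nearRows A h)
    (huz : A u z = 0) : ∑ k ∈ nearRows A h, A k z + ∑ k ∈ lowRows A h, A k z ≤ 1 := by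
  classical
  have hmiss : ∑ k ∈ (nearRows A h).erase z, (1 - A u k) = 0 := by
    have htotal : ∑ k ∈ nearRows A h, (1 - A u k) = 1 := by
      rw [sum_sub_distrib, H.sum_near_eq hP hu]; simp
    have := add_sum_erase _ (fun k => 1 - A u k) hz
    rw [huz] at this
    linarith
  have hrest : ∑ k ∈ nearRows A h, (1 - A u k) * A k z ≤ 0 := by
    rw [← add_sum_erase _ _ hz, H.diag_eq_zero, mul_zero, zero_add, ← hmiss]
    exact sum_le_sum fun k _ =>
      mul_le_of_le_one_right (sub_nonneg.2 (H.zeroOne.le_one u k)) (H.zeroOne.le_one k z)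
  have := H.sum_near_mul_add_sum_low hP hu z
  simp only [sub_mul, one_mul, sum_sub_distrib] at hrest
  linarith

lemma sum_full_colSum_le : ∑ u ∈ fullRows A h, rowSum Aᵀ u ≤ h + 1 := by
  classical
  have hswap : ∑ u ∈ fullRows A h, rowSum Aᵀ u = ∑ j, ∑ u ∈ fullRows A h, A j u := sum_comm
  have hin : ∑ j ∈ fullRows A h, ∑ u ∈ fullRows A h, A j u = 0 :=
    sum_eq_zero fun j hj => sum_eq_zero fun u hu => H.adj_eq_zero_of_mem_full hP hj hu
  have hout : ∑ j ∈ (fullRows A h)ᶜ, ∑ u ∈ fullRows A h, A j u ≤ #(fullRows A h)ᶜ := by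
    simpa using sum_le_sum fun j (_ : j ∈ (fullRows A h)ᶜ) => H.sum_full_le_one j
  rw [card_compl] at hout
  have := H.card_eq
  push_cast [card_le_univ] at hout
  linarith [sum_add_sum_compl (fullRows A h) fun j => ∑ u ∈ fullRows A h, A j u]

/-- Outside the full rows the column deficits `h - cᵢ` sum to at most `2`, while at least two
indices are neither full rows nor full columns, each with column deficit at least `1`. -/
lemma sub_one_le_colSum (hQ : (#(fullRows Aᵀ h) : ℤ) = h - 1) {j : ι}
    (hjP : j ∉ fullRows A h) (hjQ : j ∉ fullRows Aᵀ h) : h - 1 ≤ rowSum Aᵀ j := by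
  classical
  set S := (fullRows A h ∪ fullRows Aᵀ h)ᶜ
  have hS : 2 ≤ (#S : ℤ) := by
    have := card_union_le (fullRows A h) (fullRows Aᵀ h)
    have := card_le_univ (fullRows A h ∪ fullRows Aᵀ h)
    rw [card_compl]
    push_cast [this]
    linarith [H.card_eq]
  have hfull : ∑ i ∈ fullRows A h, (h - rowSum Aᵀ i) ≥ h * (h - 1) - (h + 1) := by
    rw [sum_sub_distrib, sum_const, nsmul_eq_mul, hP]
    linarith [H.sum_full_colSum_le hP]
  have hout : ∑ i ∈ (fullRows A h)ᶜ, (h - rowSum Aᵀ i) ≤ 2 := by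
    linarith [sum_add_sum_compl (fullRows A h) fun i => h - rowSum Aᵀ i,
      H.transpose.sum_sub_rowSum]
  have hsub : ∑ i ∈ S, (h - rowSum Aᵀ i) ≤ ∑ i ∈ (fullRows A h)ᶜ, (h - rowSum Aᵀ i) :=
    sum_le_sum_of_subset_of_nonneg (compl_subset_compl.2 subset_union_left)
      fun i _ _ => sub_nonneg.2 (H.colSum_le i)
  have hpos : ∀ i ∈ S, 0 ≤ h - rowSum Aᵀ i - 1 := fun i hi => by
    simp only [S, mem_compl, mem_union, not_or, mem_fullRows] at hi
    have := H.colSum_le i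
    omega
  have hj : j ∈ S := by simp [S, hjP, hjQ]
  have := single_le_sum hpos hj
  rw [sum_sub_distrib, sum_const, nsmul_eq_mul, mul_one] at this
  linarith

section TransposeFull

variable (hQ : (#(fullRows Aᵀ h) : ℤ) = h - 1) (hQlow : ∀ x ∈ fullRows Aᵀ h, rowSum A x ≤ 2)
include hQ hQlow

/-- Column `z` has sum exactly `h - 1`, and exactly one of its arcs comes from outside the full
rows, as `z` is missed by some full row. -/
lemma sum_full_adj_eq_of_mem_near {z : ι} (hz : z ∈ nearRows A h) :
    ∑ u ∈ fullRows A h, A u z = h - 2 := by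
  have h4 := H.four_le
  have hzP : z ∉ fullRows A h := by simp only [mem_nearRows, mem_fullRows] at hz ⊢; omega
  have hzQ : z ∉ fullRows Aᵀ h := fun hzQ => by
    have := hQlow z hzQ; rw [mem_nearRows] at hz; omega
  have hcol : rowSum Aᵀ z = h - 1 := by
    have := H.colSum_le z
    have := H.sub_one_le_colSum hP hQ hzP hzQ
    rw [mem_fullRows] at hzQ
    omega
  have hsplit : rowSum Aᵀ z = ∑ u ∈ fullRows A h, A u z +
      (∑ k ∈ nearRows A h, A k z + ∑ k ∈ lowRows A h, A k z) := by
    rw [← add_assoc]; exact H.sum_univ_eq_full_near_low fun k => A k z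
  have hmiss : ∃ u ∈ fullRows A h, A u z = 0 := by
    by_contra! hall
    have : ∑ u ∈ fullRows A h, A u z = h - 1 := by
      rw [← hP, sum_congr rfl fun u hu => (H.zeroOne u z).resolve_left (hall u hu)]; simp
    linarith [H.one_le_sum_near_add_sum_low hP z]
  obtain ⟨u, hu, huz⟩ := hmiss
  linarith [H.sum_near_add_sum_low_le_one hP hu hz huz, H.one_le_sum_near_add_sum_low hP z]

/-- Full columns are low rows, which leaves at most two near rows; but counting the arcs from
full rows to near rows from both ends gives `w (h - 2) = (h - 1)(w - 1)` for the number `w` of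
near rows, i.e. `w = h - 1 ≥ 3`. -/
lemma false_of_card_full_eq_sub_one : False := by
  have h4 := H.four_le
  have hQD : (#(fullRows Aᵀ h) : ℤ) ≤ #(lowRows A h) := by
    refine Nat.cast_le.2 (card_le_card fun x hx => ?_)
    have := hQlow x hx
    rw [mem_lowRows]; omega
  obtain ⟨u, hu⟩ := H.exists_rowSum_eq
  rw [← mem_fullRows] at hu
  have hD : (#(lowRows A h) : ℤ) ≤ h := by
    linarith [H.sum_full_add_sum_near_add_card_low hu, H.sum_full_eq_zero hP hu,
      sum_nonneg fun k (_ : k ∈ nearRows A h) => H.zeroOne.nonneg u k]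
  have hW : (#(nearRows A h) : ℤ) ≤ 2 := by
    linarith [H.card_full_add_card_near_add_card_low]
  have hcount : ∑ z ∈ nearRows A h, ∑ u ∈ fullRows A h, A u z =
      ∑ u ∈ fullRows A h, ∑ z ∈ nearRows A h, A u z := sum_comm
  rw [sum_congr rfl fun z hz => H.sum_full_adj_eq_of_mem_near hP hQ hQlow hz,
    sum_congr rfl fun u hu => H.sum_near_eq hP hu] at hcount
  simp only [sum_const, nsmul_eq_mul, hP] at hcount
  nlinarith

end TransposeFull

end CardFullEqSubOne

theorem false : False := by
  rcases H.card_full_eq with hP | hP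
  · exact H.false_of_card_full_eq hP
  rcases H.transpose.card_full_eq with hQ | hQ
  · exact H.transpose.false_of_card_full_eq hQ
  refine H.false_of_card_full_eq_sub_one hP hQ fun x hx => ?_
  simpa using H.transpose.colSum_le_two hQ hx

end IsEvenCritical

section MaxRowSum

variable {A : Matrix ι ι ℤ} {d c : ℤ}

theorem maxRowSum_eq_of_card_eq_two_mul {h : ℤ} (hcard : (Fintype.card ι : ℤ) = 2 * h)
    (h4 : 4 ≤ h) (hA : IsZeroOne A) (htr : ∀ i, A i i = 0) (hA2 : IsZeroOne (A * A))
    (htotal : ∑ i, rowSum A i = h ^ 2 + 2 * h - 1) (hd : IsGreatest (Set.range (rowSum A)) d)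
    (hc : IsGreatest (Set.range (rowSum Aᵀ)) c) (hdc : c ≤ d) : d = h + 1 := by
  have hr : ∀ i, rowSum A i ≤ d := fun i => hd.2 ⟨i, rfl⟩
  have hcol : ∀ j, rowSum Aᵀ j ≤ c := fun j => hc.2 ⟨j, rfl⟩
  have hdw := sum_rowSum_le_of_isGreatest hA hA2 hd
  have hcw := sum_rowSum_le_of_isGreatest hA.transpose (isZeroOne_transpose_mul_transpose hA2) hc
  rw [sum_rowSum_transpose, htotal, hcard] at hcw
  rw [htotal, hcard] at hdw
  have hc_ge : h - 1 ≤ c := by nlinarith [sq_nonneg (c - h)]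
  have hd_le : d ≤ h + 1 := by nlinarith [sq_nonneg (d - h)]
  by_contra hne
  rcases (show c = h - 1 ∨ c = h by omega) with rfl | hch
  · have hlow := total_mul_add_sub_le_sum_rowSum_mul_self
      (fun i => (hr i).trans (show d ≤ h by omega)) hcol
    have hup := sum_rowSum_mul_self_le hA2
    rw [htotal, hcard] at hlow
    rw [hcard] at hup
    nlinarith
  · have hdh : d = h := by omega
    rw [hdh] at hd hr
    rw [hch] at hc hcol
    exact IsEvenCritical.false ⟨hcard, h4, hA, htr, hA2, htotal, hr, hcol, hd.1, hc.1⟩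

theorem maxRowSum_eq_of_card_eq_two_mul_add_one {t : ℤ}
    (hcard : (Fintype.card ι : ℤ) = 2 * t + 1) (h4 : 4 ≤ t) (hA : IsZeroOne A)
    (hA2 : IsZeroOne (A * A)) (htotal : ∑ i, rowSum A i = t ^ 2 + 3 * t)
    (hd : IsGreatest (Set.range (rowSum A)) d) (hc : IsGreatest (Set.range (rowSum Aᵀ)) c)
    (hdc : c ≤ d) : d = t + 1 := by
  have hcw := sum_rowSum_le_of_isGreatest hA.transpose (isZeroOne_transpose_mul_transpose hA2) hc
  have hdw := sum_rowSum_le_of_isGreatest hA hA2 hd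
  rw [sum_rowSum_transpose, htotal, hcard] at hcw
  rw [htotal, hcard] at hdw
  have hc_ge : t ≤ c := by by_contra!; nlinarith
  have hd_le : d ≤ t + 1 := by by_contra!; nlinarith
  by_contra hne
  rw [show d = t by omega] at hd
  rw [show c = t by omega] at hc
  have hr : ∀ i, rowSum A i ≤ t := fun i => hd.2 ⟨i, rfl⟩
  have hcol : ∀ j, rowSum Aᵀ j ≤ t := fun j => hc.2 ⟨j, rfl⟩
  have hlow := total_mul_add_sub_le_sum_rowSum_mul_self hr hcol
  have hup := sum_rowSum_mul_self_le hA2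
  rw [htotal, hcard] at hlow
  rw [hcard] at hup
  obtain rfl : t = 4 := by nlinarith
  obtain ⟨v, hv⟩ := hd.1
  exact false_of_card_eq_nine (by omega) hA hA2 htotal hr hcol hv

end MaxRowSum

end ZeroOneSquare

/-- Lemma 7 (le7): if `A` is extremal (`n ≥ 8`) and its maximum row sum `d = Δ⁺` is at
least its maximum column sum `c = Δ⁻`, then `Δ⁺ = ⌈(n+1)/2⌉`. -/
theorem stmt_9 (n : ℕ) (hn : 8 ≤ n) (A : Matrix (Fin n) (Fin n) ℤ)
    (hA : ∀ i j, A i j = 0 ∨ A i j = 1)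
    (htr : ∀ i, A i i = 0)
    (hA2 : ∀ i j, (A * A) i j = 0 ∨ (A * A) i j = 1)
    (hext : ∑ i, ∑ j, A i j = (((n^2 + 4*n) / 4 : ℕ) : ℤ) - 1)
    (d c : ℤ)
    (hd : IsGreatest (Set.range fun i => ∑ j, A i j) d)
    (hc : IsGreatest (Set.range fun j => ∑ i, A i j) c)
    (hdc : c ≤ d) :
    d = (((n + 2) / 2 : ℕ) : ℤ) := by
  obtain ⟨k, rfl | rfl⟩ := Nat.even_or_odd' n
  · have hm : ((2 * k) ^ 2 + 4 * (2 * k)) / 4 = k ^ 2 + 2 * k := by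
      rw [show (2 * k) ^ 2 + 4 * (2 * k) = 4 * (k ^ 2 + 2 * k) by ring]; omega
    rw [hm] at hext
    rw [show (2 * k + 2) / 2 = k + 1 by omega]
    push_cast at hext ⊢
    exact ZeroOneSquare.maxRowSum_eq_of_card_eq_two_mul (by simp) (by omega) hA htr hA2
      hext hd hc hdc
  · have hm : ((2 * k + 1) ^ 2 + 4 * (2 * k + 1)) / 4 = k ^ 2 + 3 * k + 1 := by
      rw [show (2 * k + 1) ^ 2 + 4 * (2 * k + 1) = 4 * (k ^ 2 + 3 * k + 1) + 1 by ring]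
      omega
    rw [hm] at hext
    rw [show (2 * k + 1 + 2) / 2 = k + 1 by omega]
    push_cast at hext ⊢
    exact ZeroOneSquare.maxRowSum_eq_of_card_eq_two_mul_add_one (by simp) (by omega) hA hA2
      (hext.trans (by ring)) hd hc hdc
end

section
/- Let A be an n×n 0-1 matrix such that A² is a 0-1 matrix, and fix a row v with successor set V₁ = {j : a_{vj} = 1} and complement V₂. If u₁, u₂ ∈ V₂ with a_{u₁u₂} = 1, then there is no arc from the V₁-successors of u₁ to the V₁-successors of u₂: for all s, t ∈ V₁ with a_{u₁s} = 1 and a_{u₂t} = 1, we have a_{st} = 0. -/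
/-- Lemma 6 (le6), first part: if `u₁, u₂ ∈ V₂ = (N⁺(v))ᶜ` and `u₁ → u₂`, then there is
no arc from the `V₁`-successors of `u₁` to the `V₁`-successors of `u₂`. -/
theorem stmt_10 (n : ℕ) (A : Matrix (Fin n) (Fin n) ℤ)
    (hA : ∀ i j, A i j = 0 ∨ A i j = 1)
    (hA2 : ∀ i j, (A * A) i j = 0 ∨ (A * A) i j = 1)
    (v u₁ u₂ : Fin n) (hu₁ : A v u₁ = 0) (hu₂ : A v u₂ = 0) (h12 : A u₁ u₂ = 1) :
    ∀ s t, A v s = 1 → A v t = 1 → A u₁ s = 1 → A u₂ t = 1 → A s t = 0 := by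
  intro s t hvs hvt h1s h2t
  by_contra hst
  have hst1 : A s t = 1 := (hA s t).resolve_left hst
  have hsu : s ≠ u₂ := fun h => by simp [h, hu₂] at hvs
  have key : (2 : ℤ) ≤ (A * A) u₁ t := by
    have : ({s, u₂} : Finset (Fin n)).sum (fun j => A u₁ j * A j t)
        ≤ Finset.univ.sum (fun j => A u₁ j * A j t) := by
      apply Finset.sum_le_sum_of_subset_of_nonneg (Finset.subset_univ _)
      intro j _ _
      rcases hA u₁ j with h | h <;> rcases hA j t with h' | h' <;> simp [h, h']
    rw [Finset.sum_pair hsu, h1s, hst1, h12, h2t] at this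
    simpa [Matrix.mul_apply] using this
  rcases hA2 u₁ t with h | h <;> omega
end

section
/- Let D be a loopless digraph on n vertices avoiding two distinct directed 2-walks with the same endpoints, fix a vertex v of maximum out-degree Δ⁺ with V₁ = N⁺(v), V₂ the complement of V₁. Suppose that every vertex in V has exactly one in-neighbor in V₁, that every u ∈ V₂ has out-degree Δ⁺, and additionally assume D is extremal of size ⌊(n²+4n)/4⌋−1 with n ≥ 8. Then every u ∈ V₂ satisfies N⁺(u) = V₁. -/
open Finset

theorem stmt11_arith (n Δ : ℕ) (hn : 8 ≤ n) (hΔn : Δ ≤ n)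
    (htot : n + (n - Δ) * Δ = (n^2 + 4*n) / 4 - 1) : 3 ≤ Δ ∧ n < 3 * Δ := by
  have hmod := Nat.div_add_mod (n^2 + 4*n) 4
  have hmlt : (n^2 + 4*n) % 4 < 4 := Nat.mod_lt _ (by norm_num)
  have hq3 : 24 ≤ (n^2 + 4*n) / 4 := by
    have h64 : 96 ≤ n^2 + 4*n := by nlinarith
    calc 24 = 96/4 := by norm_num
      _ ≤ (n^2 + 4*n)/4 := Nat.div_le_div_right h64
  have h1 : 4 * ((n - Δ) * Δ) + 4 ≤ n^2 := by omega
  have h2 : n^2 < 4 * ((n - Δ) * Δ) + 8 := by omega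
  zify [hΔn] at h1 h2
  have hnz : (8:ℤ) ≤ (n:ℤ) := by exact_mod_cast hn
  have hΔ3 : 3 ≤ Δ := by
    by_contra hD
    push_neg at hD
    have hDz : (Δ:ℤ) ≤ 2 := by exact_mod_cast Nat.lt_succ_iff.mp hD
    nlinarith [sq_nonneg ((n:ℤ) - 2*(Δ:ℤ) - 4), h1, h2]
  refine ⟨hΔ3, ?_⟩
  by_contra hD
  push_neg at hD
  have hDz : (3:ℤ)*(Δ:ℤ) ≤ (n:ℤ) := by exact_mod_cast hD
  have hΔ3z : (3:ℤ) ≤ (Δ:ℤ) := by exact_mod_cast hΔ3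
  nlinarith [sq_nonneg ((n:ℤ) - 2*(Δ:ℤ) - 3), h1, h2]

/-- Lemma le9: let `D` be an extremal `F`-free loopless digraph on `n ≥ 8` vertices with
`⌊(n²+4n)/4⌋ − 1` arcs, let `v` have maximum out-degree, `V₁ = N⁺(v)`. If every vertex
has exactly one in-neighbour in `V₁` (`V₁ → V`) and every `u ∈ V₂` has out-degree `Δ⁺`,
then `N⁺(u) = V₁` for every `u ∈ V₂`. -/
theorem stmt_11 (n : ℕ) (hn : 8 ≤ n) (adj : Fin n → Fin n → Prop) [DecidableRel adj]
    (hirr : ∀ a, ¬ adj a a)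
    (hfree : ∀ a c b b', adj a b → adj b c → adj a b' → adj b' c → b = b')
    (v : Fin n)
    (hmax : ∀ x : Fin n,
      (univ.filter fun y => adj x y).card ≤ (univ.filter fun y => adj v y).card)
    (hV₁V : ∀ w : Fin n, ∃! j, adj v j ∧ adj j w)
    (hdeg : ∀ u : Fin n, ¬ adj v u →
      (univ.filter fun y => adj u y).card = (univ.filter fun y => adj v y).card)
    (hext : (univ.filter fun p : Fin n × Fin n => adj p.1 p.2).card = (n^2 + 4*n) / 4 - 1) :
    ∀ u : Fin n, ¬ adj v u → ∀ j, adj u j ↔ adj v j := by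
  classical
  set N : Fin n → Finset (Fin n) := fun x => univ.filter fun y => adj x y with hN
  have memN : ∀ x y : Fin n, y ∈ N x ↔ adj x y := by intro x y; simp [hN]
  set Δ : ℕ := (N v).card with hΔdef
  have hle : ∀ x, (N x).card ≤ Δ := by
    intro x; simp only [hΔdef, hN]; exact hmax x
  have hdegV₂ : ∀ u, ¬ adj v u → (N u).card = Δ := by
    intro u h; simp only [hΔdef, hN]; exact hdeg u h
  -- the unique in-neighbour function into V₁
  have hVchoice : ∀ w : Fin n, ∃ j, (adj v j ∧ adj j w) ∧
      ∀ j', adj v j' → adj j' w → j' = j := by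
    intro w
    obtain ⟨j, hj, hu⟩ := hV₁V w
    exact ⟨j, hj, fun j' h1 h2 => hu j' ⟨h1, h2⟩⟩
  choose f hf12 hf3 using hVchoice
  have hf1 : ∀ w, adj v (f w) := fun w => (hf12 w).1
  have hf2 : ∀ w, adj (f w) w := fun w => (hf12 w).2
  have fiber_mem : ∀ j, adj v j → ∀ z, z ∈ N j ↔ f z = j := by
    intro j hj z
    rw [memN]
    constructor
    · intro hz; exact (hf3 z j hj hz).symm
    · intro h; exact h ▸ hf2 z
  -- sum of out-degrees over V₁ is n
  have hsumV₁ : ∑ j ∈ N v, (N j).card = n := by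
    have h1 : (univ : Finset (Fin n)).card
        = ∑ j ∈ N v, ((univ : Finset (Fin n)).filter fun w => f w = j).card :=
      card_eq_sum_card_fiberwise (fun w _ => (memN v (f w)).2 (hf1 w))
    have h2 : ∀ j ∈ N v, ((univ : Finset (Fin n)).filter fun w => f w = j).card
        = (N j).card := by
      intro j hj
      have : (univ : Finset (Fin n)).filter (fun w => f w = j) = N j := by
        ext z
        simp only [mem_filter, mem_univ, true_and]
        exact (fiber_mem j ((memN v j).1 hj) z).symm
      rw [this]
    rw [sum_congr rfl h2] at h1
    rw [← h1, card_univ, Fintype.card_fin]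
  -- disjointness of out-neighbourhoods of distinct out-neighbours
  have hdisj : ∀ x w w', w ∈ N x → w' ∈ N x → w ≠ w' → Disjoint (N w) (N w') := by
    intro x w w' hw hw' hne
    rw [disjoint_left]
    intro z hz hz'
    exact hne (hfree x z w w' ((memN x w).1 hw) ((memN w z).1 hz)
      ((memN x w').1 hw') ((memN w' z).1 hz'))
  -- total arc count
  have harcs : (univ.filter fun p : Fin n × Fin n => adj p.1 p.2).card
      = ∑ x : Fin n, (N x).card := by
    rw [card_eq_sum_card_fiberwise (f := Prod.fst) (t := univ)
      (fun p _ => mem_univ _)]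
    refine sum_congr rfl fun x _ => ?_
    refine card_bij (fun p _ => p.2) ?_ ?_ ?_
    · intro p hp
      simp only [mem_filter, mem_univ, true_and] at hp
      exact (memN x p.2).2 (hp.2 ▸ hp.1)
    · intro p hp q hq h
      simp only [mem_filter, mem_univ, true_and] at hp hq
      exact Prod.ext (hp.2.trans hq.2.symm) h
    · intro y hy
      exact ⟨(x, y), by simp [mem_filter, (memN x y).1 hy], rfl⟩
  have hΔn : Δ ≤ n := by
    have := card_le_card (subset_univ (N v))
    rwa [card_univ, Fintype.card_fin] at this
  -- split of the arc count
  have hsplit : ∑ x : Fin n, (N x).card = n + (n - Δ) * Δ := by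
    rw [← sum_filter_add_sum_filter_not univ (fun x => adj v x) (fun x => (N x).card)]
    have e1 : (univ.filter fun x => adj v x) = N v := by rw [hN]
    have e3 : ∑ x ∈ univ.filter (fun x => ¬ adj v x), (N x).card = (n - Δ) * Δ := by
      rw [sum_congr rfl (fun x hx => hdegV₂ x (mem_filter.1 hx).2), sum_const,
        smul_eq_mul]
      congr 1
      rw [filter_not, card_sdiff_of_subset (filter_subset _ _), card_univ, Fintype.card_fin, e1]
    rw [e1, hsumV₁, e3]
  -- arithmetic: n < 3Δ and 3 ≤ Δ
  have harith : 3 ≤ Δ ∧ n < 3 * Δ := by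
    apply stmt11_arith n Δ hn hΔn
    rw [← hsplit, ← harcs]
    exact hext
  have hΔ3 : 3 ≤ Δ := harith.1
  have hn3 : n < 3 * Δ := harith.2
  -- Y u = out-neighbours in V₂, B u = V₁ minus out-neighbours
  set Y : Fin n → Finset (Fin n) := fun u => (N u).filter (fun y => ¬ adj v y) with hYdef
  set B : Fin n → Finset (Fin n) := fun u => (N v) \ (N u) with hBdef
  have memY : ∀ u y, y ∈ Y u ↔ (y ∈ N u ∧ ¬ adj v y) := by
    intro u y; simp [hYdef, mem_filter]
  have memB : ∀ u j, j ∈ B u ↔ (j ∈ N v ∧ j ∉ N u) := by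
    intro u j; simp [hBdef, mem_sdiff]
  have main : ∀ u, ¬ adj v u →
      ((B u).card = (Y u).card) ∧
      ((Y u).biUnion N = (B u).biUnion N) ∧
      (∀ j ∈ B u, (N j).card = Δ) ∧
      ((Y u).card ≤ 2) ∧
      (∀ y ∈ Y u, N y ⊆ (B u).biUnion N) := by
    intro u hu
    have hcardNu : (N u).card = Δ := hdegV₂ u hu
    have hYB : (B u).card = (Y u).card := by
      have h1 : ((N u).filter (fun y => adj v y)).card
          + ((N u).filter (fun y => ¬ adj v y)).card = (N u).card :=
        card_filter_add_card_filter_not _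
      have h2 : (N v \ N u).card + (N v ∩ N u).card = (N v).card :=
        card_sdiff_add_card_inter _ _
      have h3 : (N v ∩ N u) = (N u).filter (fun y => adj v y) := by
        ext z
        simp only [mem_inter, mem_filter, memN]
        tauto
      rw [h3] at h2
      have h4 : (Y u).card = ((N u).filter (fun y => ¬ adj v y)).card := rfl
      have h5 : (B u).card = (N v \ N u).card := rfl
      have h6 : Δ = (N v).card := hΔdef
      omega
    have hsub : ∀ y ∈ Y u, N y ⊆ (B u).biUnion N := by
      intro y hy z hz
      obtain ⟨hyN, hyV⟩ := (memY u y).1 hy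
      have hjB : f z ∈ B u := by
        refine (memB u (f z)).2 ⟨(memN v (f z)).2 (hf1 z), ?_⟩
        intro hjNu
        have heq := hfree u z (f z) y ((memN u (f z)).1 hjNu) (hf2 z)
          ((memN u y).1 hyN) ((memN y z).1 hz)
        exact hyV (heq ▸ hf1 z)
      exact mem_biUnion.2 ⟨f z, hjB, (memN (f z) z).2 ((memN (f z) z).1 ((fiber_mem (f z) (hf1 z) z).2 rfl))⟩
    have hYcard : ((Y u).biUnion N).card = (Y u).card * Δ := by
      rw [card_biUnion (fun y hy y' hy' hne =>
        hdisj u y y' (((memY u y).1 hy).1) (((memY u y').1 hy').1) hne)]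
      rw [sum_congr rfl (fun y hy => hdegV₂ y (((memY u y).1 hy).2)), sum_const,
        smul_eq_mul]
    have hBcard : ((B u).biUnion N).card = ∑ j ∈ B u, (N j).card :=
      card_biUnion (fun j hj j' hj' hne =>
        hdisj v j j' (((memB u j).1 hj).1) (((memB u j').1 hj').1) hne)
    have hsubU : (Y u).biUnion N ⊆ (B u).biUnion N := biUnion_subset.2 hsub
    have hchain : ∑ j ∈ B u, (N j).card ≤ (B u).card * Δ := by
      calc ∑ j ∈ B u, (N j).card ≤ ∑ _j ∈ B u, Δ := sum_le_sum (fun j _ => hle j)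
        _ = (B u).card * Δ := by rw [sum_const, smul_eq_mul]
    have hlow : (Y u).card * Δ ≤ ∑ j ∈ B u, (N j).card := by
      rw [← hYcard, ← hBcard]; exact card_le_card hsubU
    have hsumB : ∑ j ∈ B u, (N j).card = (B u).card * Δ := by
      rw [hYB] at hchain ⊢
      omega
    have hheavy : ∀ j ∈ B u, (N j).card = Δ := by
      have := (sum_eq_sum_iff_of_le (fun j (_ : j ∈ B u) => hle j)).1
        (by rw [hsumB, sum_const, smul_eq_mul])
      exact this
    have hUeq : (Y u).biUnion N = (B u).biUnion N := by
      refine eq_of_subset_of_card_le hsubU ?_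
      rw [hYcard, hBcard, hsumB, hYB]
    have hk2 : (Y u).card ≤ 2 := by
      have h1 : ∑ j ∈ B u, (N j).card ≤ ∑ j ∈ N v, (N j).card :=
        sum_le_sum_of_subset (fun j hj => ((memB u j).1 hj).1)
      rw [hsumB, hsumV₁, hYB] at h1
      by_contra hk
      push_neg at hk
      have : 3 * Δ ≤ (Y u).card * Δ := Nat.mul_le_mul_right _ hk
      omega
    exact ⟨hYB, hUeq, hheavy, hk2, hsub⟩
  -- heavy vertices of V₁
  set Hb : Finset (Fin n) := (N v).filter (fun j => (N j).card = Δ) with hHbdef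
  have memHb : ∀ j, j ∈ Hb ↔ (j ∈ N v ∧ (N j).card = Δ) := by
    intro j; simp [hHbdef, mem_filter]
  have hHbcard : Hb.card ≤ 2 := by
    have h1 : ∑ j ∈ Hb, (N j).card ≤ ∑ j ∈ N v, (N j).card :=
      sum_le_sum_of_subset (filter_subset _ _)
    rw [hsumV₁] at h1
    have h2 : ∑ j ∈ Hb, (N j).card = Hb.card * Δ := by
      rw [sum_congr rfl (fun j hj => ((memHb j).1 hj).2), sum_const, smul_eq_mul]
    by_contra h
    push_neg at h
    have : 3 * Δ ≤ Hb.card * Δ := Nat.mul_le_mul_right _ h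
    omega
  have hBHb : ∀ u, ¬ adj v u → B u ⊆ Hb := by
    intro u hu j hj
    exact (memHb j).2 ⟨((memB u j).1 hj).1, (main u hu).2.2.1 j hj⟩
  -- a heavy vertex whose fiber misses V₂ is impossible
  have hfull : ∀ j ∈ Hb, ((N j).filter (fun z => ¬ adj v z)).card = 0 → False := by
    intro j hj hc
    obtain ⟨hjv, hjΔ⟩ := (memHb j).1 hj
    have hsub : N j ⊆ N v := by
      intro z hz
      by_contra hzv
      have hzY : z ∈ (N j).filter (fun z => ¬ adj v z) :=
        mem_filter.2 ⟨hz, fun h => hzv ((memN v z).2 h)⟩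
      rw [card_eq_zero.1 hc] at hzY
      exact absurd hzY (notMem_empty z)
    have hNjv : N j = N v := eq_of_subset_of_card_le hsub (by rw [hjΔ])
    exact hirr j ((memN j j).1 (hNjv.symm ▸ hjv))
  -- two distinct heavy vertices with "thin" fibers are impossible
  have hthin : ∀ j j', j ∈ Hb → j' ∈ Hb → j ≠ j' →
      ((N j).filter (fun z => ¬ adj v z)).card ≤ 1 →
      ((N j').filter (fun z => ¬ adj v z)).card ≤ 1 → False := by
    intro j j' hj hj' hne h1 h2
    obtain ⟨hjv, hjΔ⟩ := (memHb j).1 hj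
    obtain ⟨hj'v, hj'Δ⟩ := (memHb j').1 hj'
    have d1 : ((N j).filter (fun z => adj v z)).card
        + ((N j).filter (fun z => ¬ adj v z)).card = Δ := by
      rw [card_filter_add_card_filter_not, hjΔ]
    have d2 : ((N j').filter (fun z => adj v z)).card
        + ((N j').filter (fun z => ¬ adj v z)).card = Δ := by
      rw [card_filter_add_card_filter_not, hj'Δ]
    have hdisj' : Disjoint ((N j).filter (fun z => adj v z))
        ((N j').filter (fun z => adj v z)) :=
      (hdisj v j j' hjv hj'v hne).mono (filter_subset _ _) (filter_subset _ _)
    have hunion : ((N j).filter (fun z => adj v z)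
        ∪ (N j').filter (fun z => adj v z)).card ≤ Δ := by
      refine card_le_card (union_subset ?_ ?_) <;>
        intro z hz <;> exact (memN v z).2 (mem_filter.1 hz).2
    rw [card_union_of_disjoint hdisj'] at hunion
    omega
  -- propagation: successors of bad vertices are bad
  have hprop : ∀ u, ¬ adj v u → ∀ y ∈ Y u, (Y y).Nonempty := by
    intro u hu y hy
    by_contra hYy
    have hYy' : Y y = ∅ := not_nonempty_iff_eq_empty.1 hYy
    obtain ⟨hyN, hyV⟩ := (memY u y).1 hy
    have hNyV : N y ⊆ N v := by
      intro z hz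
      by_contra hzv
      have : z ∈ Y y := (memY y z).2 ⟨hz, fun h => hzv ((memN v z).2 h)⟩
      rw [hYy'] at this
      exact absurd this (notMem_empty z)
    have hNy : N y = N v := eq_of_subset_of_card_le hNyV (by rw [hdegV₂ y hyV])
    have hk := (main u hu).2.2.2.1
    have hk1 : 1 ≤ (Y u).card := card_pos.2 ⟨y, hy⟩
    by_cases hcase : (Y u).card = 1
    · obtain ⟨c, hc⟩ := card_eq_one.1 hcase
      have hyc : y = c := mem_singleton.1 (hc ▸ hy)
      obtain ⟨j, hBj⟩ := card_eq_one.1 (by rw [(main u hu).1, hcase] : (B u).card = 1)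
      have hU := (main u hu).2.1
      rw [hc, hBj, singleton_biUnion, singleton_biUnion] at hU
      have hjv : j ∈ N v := ((memB u j).1 (hBj ▸ mem_singleton_self j)).1
      have : j ∈ N j := by
        rw [← hU, ← hyc, hNy]; exact hjv
      exact hirr j ((memN j j).1 this)
    · have hcase2 : (Y u).card = 2 := by omega
      have herase : ((Y u).erase y).card = 1 := by rw [card_erase_of_mem hy, hcase2]
      obtain ⟨y', hy'⟩ := card_eq_one.1 herase
      have hy'mem : y' ∈ Y u := (erase_subset _ _) (hy' ▸ mem_singleton_self y')
      have hy'ne : y' ≠ y := (mem_erase.1 (hy' ▸ mem_singleton_self y')).1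
      obtain ⟨hy'N, hy'V⟩ := (memY u y').1 hy'mem
      have hdd : Disjoint (N y') (N y) := hdisj u y' y hy'N hyN hy'ne
      have hYeq : Y y' = N y' := by
        refine filter_true_of_mem ?_
        intro z hz hvz
        have hzNv : z ∈ N y := hNy.symm ▸ ((memN v z).2 hvz)
        exact (disjoint_left.1 hdd) hz hzNv
      have h3 := (main y' hy'V).2.2.2.1
      rw [hYeq, hdegV₂ y' hy'V] at h3
      omega
  -- K2: a bad vertex with two bad successors whose neighbourhood is inside the
  -- union of heavy fibers is impossible
  have hK2 : ∀ x, ¬ adj v x → (Y x).card = 2 → N x ⊆ (B x).biUnion N → False := by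
    intro x hx hk2x hsubx
    obtain ⟨w₁, w₂, hww, hYx⟩ := card_eq_two.1 hk2x
    have hw₁Y : w₁ ∈ Y x := hYx ▸ mem_insert_self _ _
    have hw₂Y : w₂ ∈ Y x := hYx ▸ mem_insert_of_mem (mem_singleton_self _)
    obtain ⟨hw₁N, hw₁V⟩ := (memY x w₁).1 hw₁Y
    obtain ⟨hw₂N, hw₂V⟩ := (memY x w₂).1 hw₂Y
    have hU : (Y x).biUnion N = (B x).biUnion N := (main x hx).2.1
    have hUYx : (Y x).biUnion N = N w₁ ∪ N w₂ := by
      rw [hYx, biUnion_insert, singleton_biUnion]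
    have hBxHb : B x = Hb := by
      refine eq_of_subset_of_card_le (hBHb x hx) ?_
      rw [(main x hx).1, hk2x]
      exact hHbcard
    -- w₁ and w₂ point at each other
    have hw₁U : w₁ ∈ N w₁ ∪ N w₂ := by
      rw [← hUYx, hU]; exact hsubx hw₁N
    have hadj21 : w₁ ∈ N w₂ := by
      rcases mem_union.1 hw₁U with h | h
      · exact absurd ((memN w₁ w₁).1 h) (hirr w₁)
      · exact h
    have hw₂U : w₂ ∈ N w₁ ∪ N w₂ := by
      rw [← hUYx, hU]; exact hsubx hw₂N
    have hadj12 : w₂ ∈ N w₁ := by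
      rcases mem_union.1 hw₂U with h | h
      · exact h
      · exact absurd ((memN w₂ w₂).1 h) (hirr w₂)
    have hdd := hdisj x w₁ w₂ hw₁N hw₂N hww
    -- no element of Y x with a successor in Y x can itself have two bad successors
    have hsub2 : ∀ wa wb, wa ∈ Y x → wb ∈ Y x → wa ≠ wb → wb ∈ N wa →
        (Y wa).card = 2 → False := by
      intro wa wb hwa hwb hne hmem hk2a
      obtain ⟨hwaN, hwaV⟩ := (memY x wa).1 hwa
      obtain ⟨hwbN, hwbV⟩ := (memY x wb).1 hwb
      have hBa : B wa = Hb := by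
        refine eq_of_subset_of_card_le (hBHb wa hwaV) ?_
        rw [(main wa hwaV).1, hk2a]
        exact hHbcard
      have hUa : (Y wa).biUnion N = (B x).biUnion N := by
        rw [(main wa hwaV).2.1, hBa, hBxHb]
      have hwbYa : wb ∈ Y wa := (memY wa wb).2 ⟨hmem, hwbV⟩
      have herase : ((Y wa).erase wb).card = 1 := by
        rw [card_erase_of_mem hwbYa, hk2a]
      obtain ⟨sv, hsv⟩ := card_eq_one.1 herase
      have hsY : sv ∈ Y wa := (erase_subset _ _) (hsv ▸ mem_singleton_self sv)
      have hsne : sv ≠ wb := (mem_erase.1 (hsv ▸ mem_singleton_self sv)).1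
      obtain ⟨hsN, hsV⟩ := (memY wa sv).1 hsY
      have hYa2 : Y wa = {wb, sv} := by
        refine (eq_of_subset_of_card_le ?_ ?_).symm
        · exact insert_subset hwbYa (singleton_subset_iff.2 hsY)
        · rw [hk2a, card_insert_of_notMem (by simp [Ne.symm hsne]), card_singleton]
      have hUYa : (Y wa).biUnion N = N wb ∪ N sv := by
        rw [hYa2, biUnion_insert, singleton_biUnion]
      have hYxab : Y x = {wa, wb} := by
        refine (eq_of_subset_of_card_le ?_ ?_).symm
        · exact insert_subset hwa (singleton_subset_iff.2 hwb)
        · rw [hk2x, card_insert_of_notMem (by simp [hne]), card_singleton]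
      have hUxab : (Y x).biUnion N = N wa ∪ N wb := by
        rw [hYxab, biUnion_insert, singleton_biUnion]
      have hdab : Disjoint (N wa) (N wb) := hdisj x wa wb hwaN hwbN hne
      have hdsb : Disjoint (N sv) (N wb) := hdisj wa sv wb hsN hmem hsne
      have hNs : N sv = N wa := by
        ext z
        constructor
        · intro hz
          have hz1 : z ∈ (Y wa).biUnion N := mem_biUnion.2 ⟨sv, hsY, hz⟩
          rw [hUa, ← hU, hUxab] at hz1
          rcases mem_union.1 hz1 with h | h
          · exact h
          · exact absurd h (disjoint_left.1 hdsb hz)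
        · intro hz
          have hz1 : z ∈ (Y x).biUnion N := mem_biUnion.2 ⟨wa, hwa, hz⟩
          rw [hU, ← hUa, hUYa] at hz1
          rcases mem_union.1 hz1 with h | h
          · exact absurd h (disjoint_left.1 hdab hz)
          · exact h
      have : sv ∈ N sv := hNs.symm ▸ hsN
      exact hirr sv ((memN sv sv).1 this)
    -- hence both w₁ and w₂ have exactly one bad successor
    have hw₂Y₁ : w₂ ∈ Y w₁ := (memY w₁ w₂).2 ⟨hadj12, hw₂V⟩
    have hw₁Y₂ : w₁ ∈ Y w₂ := (memY w₂ w₁).2 ⟨hadj21, hw₁V⟩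
    have hkw₁ : (Y w₁).card = 1 := by
      have hub := (main w₁ hw₁V).2.2.2.1
      have hpos : 1 ≤ (Y w₁).card := card_pos.2 ⟨w₂, hw₂Y₁⟩
      have hne2 : (Y w₁).card ≠ 2 := fun h => hsub2 w₁ w₂ hw₁Y hw₂Y hww hadj12 h
      omega
    have hkw₂ : (Y w₂).card = 1 := by
      have hub := (main w₂ hw₂V).2.2.2.1
      have hpos : 1 ≤ (Y w₂).card := card_pos.2 ⟨w₁, hw₁Y₂⟩
      have hne2 : (Y w₂).card ≠ 2 := fun h => hsub2 w₂ w₁ hw₂Y hw₁Y (Ne.symm hww) hadj21 h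
      omega
    have hYw₁ : Y w₁ = {w₂} := by
      obtain ⟨c, hc⟩ := card_eq_one.1 hkw₁
      rw [hc] at hw₂Y₁ ⊢
      rw [mem_singleton.1 hw₂Y₁]
    have hYw₂ : Y w₂ = {w₁} := by
      obtain ⟨c, hc⟩ := card_eq_one.1 hkw₂
      rw [hc] at hw₁Y₂ ⊢
      rw [mem_singleton.1 hw₁Y₂]
    -- B x = {j₁, j₂}; their fibers have few vertices of V₂
    obtain ⟨j₁, j₂, hjne, hBx2⟩ := card_eq_two.1
      (by rw [(main x hx).1, hk2x] : (B x).card = 2)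
    have hj₁B : j₁ ∈ B x := hBx2 ▸ mem_insert_self _ _
    have hj₂B : j₂ ∈ B x := hBx2 ▸ mem_insert_of_mem (mem_singleton_self _)
    have hNj : ∀ j ∈ B x, ∀ z ∈ N j, ¬ adj v z → z = w₁ ∨ z = w₂ := by
      intro j hj z hz hzv
      have hzU : z ∈ (B x).biUnion N := mem_biUnion.2 ⟨j, hj, hz⟩
      rw [← hU, hUYx] at hzU
      rcases mem_union.1 hzU with h | h
      · exact Or.inr (mem_singleton.1 (hYw₁ ▸ (memY w₁ z).2 ⟨h, hzv⟩))
      · exact Or.inl (mem_singleton.1 (hYw₂ ▸ (memY w₂ z).2 ⟨h, hzv⟩))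
    have hF : ∀ j ∈ B x, (N j).filter (fun z => ¬ adj v z) ⊆ {w₁, w₂} := by
      intro j hj z hz
      obtain ⟨hz1, hz2⟩ := mem_filter.1 hz
      rcases hNj j hj z hz1 hz2 with h | h
      · exact h ▸ mem_insert_self _ _
      · exact h ▸ mem_insert_of_mem (mem_singleton_self _)
    have hj₁v : j₁ ∈ N v := ((memB x j₁).1 hj₁B).1
    have hj₂v : j₂ ∈ N v := ((memB x j₂).1 hj₂B).1
    have hdisjF : Disjoint ((N j₁).filter (fun z => ¬ adj v z))
        ((N j₂).filter (fun z => ¬ adj v z)) :=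
      (hdisj v j₁ j₂ hj₁v hj₂v hjne).mono (filter_subset _ _) (filter_subset _ _)
    have hcards : ((N j₁).filter (fun z => ¬ adj v z)).card
        + ((N j₂).filter (fun z => ¬ adj v z)).card ≤ 2 := by
      rw [← card_union_of_disjoint hdisjF]
      calc (((N j₁).filter (fun z => ¬ adj v z))
          ∪ ((N j₂).filter (fun z => ¬ adj v z))).card
          ≤ ({w₁, w₂} : Finset (Fin n)).card :=
            card_le_card (union_subset (hF j₁ hj₁B) (hF j₂ hj₂B))
        _ ≤ 2 := card_insert_le _ _ |>.trans (by rw [card_singleton])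
    have hj₁Hb : j₁ ∈ Hb := hBHb x hx hj₁B
    have hj₂Hb : j₂ ∈ Hb := hBHb x hx hj₂B
    rcases Nat.eq_zero_or_pos ((N j₁).filter (fun z => ¬ adj v z)).card with h0 | hp1
    · exact hfull j₁ hj₁Hb h0
    rcases Nat.eq_zero_or_pos ((N j₂).filter (fun z => ¬ adj v z)).card with h0 | hp2
    · exact hfull j₂ hj₂Hb h0
    exact hthin j₁ j₂ hj₁Hb hj₂Hb hjne (by omega) (by omega)
  -- K2 via a subset of heavy vertices
  have hK2' : ∀ x T, ¬ adj v x → (Y x).card = 2 → T ⊆ Hb → N x ⊆ T.biUnion N → False := by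
    intro x T hx hk2x hT hsubT
    have hBx : B x = Hb := by
      refine eq_of_subset_of_card_le (hBHb x hx) ?_
      rw [(main x hx).1, hk2x]
      exact hHbcard
    refine hK2 x hx hk2x (hsubT.trans ?_)
    rw [hBx]
    exact biUnion_subset_biUnion_of_subset_left N hT
  -- main claim: there are no arcs inside V₂
  have key : ∀ u y₀, ¬ adj v u → adj u y₀ → adj v y₀ := by
    intro u y₀ hu huy
    by_contra hvy
    have hy₀Y : y₀ ∈ Y u := (memY u y₀).2 ⟨(memN u y₀).2 huy, hvy⟩
    have hy₀V : ¬ adj v y₀ := hvy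
    have hNy₀sub : N y₀ ⊆ (B u).biUnion N := (main u hu).2.2.2.2 y₀ hy₀Y
    have hyne : (Y y₀).Nonempty := hprop u hu y₀ hy₀Y
    have hk : (Y y₀).card = 1 ∨ (Y y₀).card = 2 := by
      have h1 := (main y₀ hy₀V).2.2.2.1
      have h2 := card_pos.2 hyne
      omega
    rcases hk with hk1 | hk2c
    · -- k_{y₀} = 1
      obtain ⟨j, hBj⟩ := card_eq_one.1 (by rw [(main y₀ hy₀V).1, hk1] : (B y₀).card = 1)
      obtain ⟨w, hYw⟩ := card_eq_one.1 hk1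
      have hUy : N w = N j := by
        have := (main y₀ hy₀V).2.1
        rw [hYw, hBj, singleton_biUnion, singleton_biUnion] at this
        exact this
      have hwY : w ∈ Y y₀ := hYw ▸ mem_singleton_self w
      obtain ⟨hwN, hwV⟩ := (memY y₀ w).1 hwY
      have hjHb : j ∈ Hb := hBHb y₀ hy₀V (hBj ▸ mem_singleton_self j)
      have hwne : (Y w).Nonempty := hprop y₀ hy₀V w hwY
      have hkw : (Y w).card = 1 ∨ (Y w).card = 2 := by
        have h1 := (main w hwV).2.2.2.1
        have h2 := card_pos.2 hwne
        omega
      rcases hkw with hkw1 | hkw2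
      · -- k_w = 1
        obtain ⟨j', hBj'⟩ := card_eq_one.1 (by rw [(main w hwV).1, hkw1] : (B w).card = 1)
        obtain ⟨t, hYt⟩ := card_eq_one.1 hkw1
        have hUt : N t = N j' := by
          have := (main w hwV).2.1
          rw [hYt, hBj', singleton_biUnion, singleton_biUnion] at this
          exact this
        have htY : t ∈ Y w := hYt ▸ mem_singleton_self t
        obtain ⟨htN, htV⟩ := (memY w t).1 htY
        have hj'Hb : j' ∈ Hb := hBHb w hwV (hBj' ▸ mem_singleton_self j')
        by_cases hjj : j' = j
        · have : t ∈ N t := by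
            rw [hUt, hjj, ← hUy]
            exact htN
          exact hirr t ((memN t t).1 this)
        · have htne : (Y t).Nonempty := hprop w hwV t htY
          have hkt : (Y t).card = 1 ∨ (Y t).card = 2 := by
            have h1 := (main t htV).2.2.2.1
            have h2 := card_pos.2 htne
            omega
          rcases hkt with hkt1 | hkt2
          · -- both j and j' are thin and heavy: contradiction
            have e1 : (N j).filter (fun z => ¬ adj v z) = Y w := by
              rw [← hUy]
            have e2 : (N j').filter (fun z => ¬ adj v z) = Y t := by
              rw [← hUt]
            refine hthin j j' hjHb hj'Hb (Ne.symm hjj) ?_ ?_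
            · rw [e1, hkw1]
            · rw [e2, hkt1]
          · exact hK2' t {j'} htV hkt2 (singleton_subset_iff.2 hj'Hb)
              (by rw [singleton_biUnion, ← hUt])
      · -- k_w = 2
        exact hK2' w {j} hwV hkw2 (singleton_subset_iff.2 hjHb)
          (by rw [singleton_biUnion, ← hUy])
    · -- k_{y₀} = 2
      exact hK2' y₀ (B u) hy₀V hk2c (hBHb u hu) hNy₀sub
  -- conclusion
  intro u hu j
  constructor
  · exact fun h => key u j hu h
  · intro hvj
    have hsub : N u ⊆ N v := fun z hz => (memN v z).2 (key u z hu ((memN u z).1 hz))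
    have heq : N u = N v := eq_of_subset_of_card_le hsub (by rw [hdegV₂ u hu])
    exact (memN u j).1 (heq.symm ▸ ((memN v j).2 hvj))
end

section
/- Let A be an n×n 0-1 matrix with zero trace and A² a 0-1 matrix. Suppose the maximum row sum Δ⁺ of A is at least the maximum column sum Δ⁻. Then the number of 1-entries of A is at most (Δ⁺)² + n − 1 provided that for every fixed row v of maximum row sum, every other row has at most one 1-entry in the columns outside the support of row v. [Unconditional version as in the paper's proof of Lemma 7: if additionally A is extremal with n ≥ 8, then e(A) ≤ (Δ⁺)² + n − 1.] -/
/-!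
Fix a row `v` of maximum row sum `d` and split the columns into the support `V₁` of row `v`
and its complement `V₂`. Since `A` is a 0-1 matrix, `V₁` has exactly `d` columns, each with
column sum at most `c ≤ d`, so they carry at most `d²` ones. In the columns of `V₂` row `v` has
no ones and every other row at most one, so they carry at most `n - 1` ones.
-/

open Finset

lemma Finset.sum_eq_card_filter_ne_zero_of_zero_or_one {ι R : Type*} [AddCommMonoidWithOne R]
    [DecidableEq R] (s : Finset ι) {f : ι → R} (hf : ∀ j, f j = 0 ∨ f j = 1) :
    ∑ j ∈ s, f j = #{j ∈ s | f j ≠ 0} := by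
  rw [natCast_card_filter]
  refine sum_congr rfl fun j _ => ?_
  rcases hf j with h | h <;> by_cases h0 : f j = 0 <;> simp_all

lemma Finset.sum_le_card_sub_one {ι R : Type*} [Fintype ι] [DecidableEq ι] [Ring R]
    [PartialOrder R] [IsOrderedRing R] {f : ι → R} (v : ι) (hv : f v ≤ 0)
    (hf : ∀ u ≠ v, f u ≤ 1) :
    ∑ i, f i ≤ Fintype.card ι - 1 := by
  have hcard : ((univ.erase v).card : R) = Fintype.card ι - 1 := by
    rw [card_erase_of_mem (mem_univ v), card_univ,
      Nat.cast_sub (Fintype.card_pos_iff.mpr ⟨v⟩), Nat.cast_one]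
  calc ∑ i, f i = f v + ∑ i ∈ univ.erase v, f i := (add_sum_erase _ _ (mem_univ v)).symm
    _ ≤ 0 + #(univ.erase v) • (1 : R) :=
        add_le_add hv (sum_le_card_nsmul _ _ _ fun u hu => hf u (ne_of_mem_erase hu))
    _ = Fintype.card ι - 1 := by rw [zero_add, nsmul_one, hcard]

lemma Matrix.sum_sum_le_card_nsmul_of_col_sum_le {ι κ R : Type*} [Fintype ι]
    [AddCommMonoid R] [PartialOrder R] [IsOrderedAddMonoid R] (A : Matrix ι κ R) {c : R}
    (hc : ∀ j, ∑ i, A i j ≤ c) (S : Finset κ) :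
    ∑ i, ∑ j ∈ S, A i j ≤ #S • c := by
  rw [sum_comm (f := fun i j => A i j)]
  exact sum_le_card_nsmul _ _ _ fun j _ => hc j

theorem stmt_13_general (n : ℕ) (A : Matrix (Fin n) (Fin n) ℤ)
    (hA : ∀ i j, A i j = 0 ∨ A i j = 1)
    (d c : ℤ)
    (hd : IsGreatest (Set.range fun i => ∑ j, A i j) d)
    (hc : IsGreatest (Set.range fun j => ∑ i, A i j) c)
    (hdc : c ≤ d)
    (hα : ∀ v, (∑ j, A v j) = d → ∀ u, u ≠ v →
      (∑ j ∈ univ.filter (fun j => A v j = 0), A u j) ≤ 1) :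
    ∑ i, ∑ j, A i j ≤ d ^ 2 + n - 1 := by
  obtain ⟨⟨v, hv⟩, -⟩ := hd
  have hv : ∑ j, A v j = d := hv
  set V₂ := univ.filter fun j => A v j = 0
  set V₁ := univ.filter fun j => A v j ≠ 0
  have hV₁ : (#V₁ : ℤ) = d := by
    rw [← hv, sum_eq_card_filter_ne_zero_of_zero_or_one _ (hA v)]
  have hd0 : 0 ≤ d := hV₁ ▸ Nat.cast_nonneg _
  have hB : ∑ i, ∑ j ∈ V₁, A i j ≤ d ^ 2 :=
    calc ∑ i, ∑ j ∈ V₁, A i j ≤ #V₁ • c :=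
          A.sum_sum_le_card_nsmul_of_col_sum_le (fun j => hc.2 ⟨j, rfl⟩) V₁
      _ = d * c := by rw [nsmul_eq_mul, hV₁]
      _ ≤ d ^ 2 := by nlinarith
  have hC : ∑ i, ∑ j ∈ V₂, A i j ≤ n - 1 := by
    simpa using sum_le_card_sub_one v (sum_eq_zero fun j hj => (mem_filter.mp hj).2).le
      (hα v hv)
  calc ∑ i, ∑ j, A i j = ∑ i, ∑ j ∈ V₂, A i j + ∑ i, ∑ j ∈ V₁, A i j := by
        rw [← sum_add_distrib]
        exact sum_congr rfl fun i _ => (sum_filter_add_sum_filter_not _ _ _).symm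
    _ ≤ d ^ 2 + n - 1 := by linarith

/-- Inequality from the proof of Lemma 7: if `A` is a 0-1 matrix with zero trace whose
square is a 0-1 matrix, `d = Δ⁺ ≥ Δ⁻ = c`, and for every row `v` of maximum row sum
every other row has at most one 1-entry in the columns outside the support of row `v`,
then the number of ones of `A` is at most `(Δ⁺)² + n − 1`. -/
theorem stmt_13 (n : ℕ) (A : Matrix (Fin n) (Fin n) ℤ)
    (hA : ∀ i j, A i j = 0 ∨ A i j = 1)
    (htr : ∀ i, A i i = 0)
    (hA2 : ∀ i j, (A * A) i j = 0 ∨ (A * A) i j = 1)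
    (d c : ℤ)
    (hd : IsGreatest (Set.range fun i => ∑ j, A i j) d)
    (hc : IsGreatest (Set.range fun j => ∑ i, A i j) c)
    (hdc : c ≤ d)
    (hα : ∀ v, (∑ j, A v j) = d → ∀ u, u ≠ v →
      (∑ j ∈ univ.filter (fun j => A v j = 0), A u j) ≤ 1) :
    ∑ i, ∑ j, A i j ≤ d ^ 2 + n - 1 :=
  stmt_13_general n A hA d c hd hc hdc hα
end

section
/- The digraph D₃ (for odd n ≥ 3) is free of two distinct directed 2-walks with the same endpoints: let V₁ be a set of (n+1)/2 vertices containing a distinguished vertex y such that the arcs inside V₁ form a 2-arborescence T(y) rooted at y, let V₂ be the remaining (n−1)/2 vertices with no arcs among them, let V₁∖{y} match V₂ (a perfect matching of arcs from V₁∖{y} to V₂), and let every u ∈ V₂ have an arc to every vertex of V₁. Then for all vertices a, c there is at most one vertex b with a → b and b → c. -/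
/-- The digraph `D₃` (odd `n ≥ 3`) is `F`-free: with `V₁` of size `(n+1)/2` whose
internal arcs form a 2-arborescence `T(y)` rooted at `y ∈ V₁` (encoded by a parent
function `p` with depth at most 2), no arcs inside `V₂ = V₁ᶜ`, the arcs from `V₁` to
`V₂` forming a perfect matching `f` of `V₁ \ {y}` onto `V₂`, and all arcs from each
vertex of `V₂` to each vertex of `V₁`, any two directed 2-walks with the same initial
and terminal vertices coincide. -/
theorem stmt_14 (n : ℕ) (hn : 3 ≤ n) (hodd : Odd n)
    (adj : Fin n → Fin n → Prop)
    (V₁ : Finset (Fin n)) (y : Fin n) (hy : y ∈ V₁)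
    (hcard : V₁.card = (n + 1) / 2)
    -- arcs inside V₁ form the 2-arborescence T(y), with parent function p
    (p : Fin n → Fin n)
    (hT : ∀ a ∈ V₁, ∀ b ∈ V₁, (adj a b ↔ b ≠ y ∧ p b = a))
    (hp : ∀ b ∈ V₁, b ≠ y → p b ∈ V₁ ∧ (p b = y ∨ (p b ≠ y ∧ p (p b) = y)))
    -- no arcs inside V₂
    (hV₂ : ∀ a ∉ V₁, ∀ b ∉ V₁, ¬ adj a b)
    -- V₁ \ {y} matches V₂ via the bijection f
    (f : Fin n → Fin n)
    (hf : ∀ a ∈ V₁, a ≠ y → f a ∉ V₁)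
    (hfinj : ∀ a ∈ V₁, ∀ b ∈ V₁, a ≠ y → b ≠ y → f a = f b → a = b)
    (hfsurj : ∀ u ∉ V₁, ∃ a ∈ V₁, a ≠ y ∧ f a = u)
    (hmatch : ∀ a ∈ V₁, ∀ b ∉ V₁, (adj a b ↔ a ≠ y ∧ f a = b))
    -- every vertex of V₂ has an arc to every vertex of V₁
    (hback : ∀ u ∉ V₁, ∀ x ∈ V₁, adj u x) :
    ∀ a c b b', adj a b → adj b c → adj a b' → adj b' c → b = b' := by
  intro a c b b' hab hbc hab' hb'c
  have key : ∀ u v, u ∈ V₁ → v ∉ V₁ → adj a u → adj u c → adj a v → adj v c → False := by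
    intro u v hu hv hau huc hav hvc
    have ha : a ∈ V₁ := by
      by_contra ha
      exact hV₂ a ha v hv hav
    obtain ⟨hay, hfav⟩ := (hmatch a ha v hv).mp hav
    have hc : c ∈ V₁ := by
      by_contra hc
      exact hV₂ v hv c hc hvc
    obtain ⟨hcy, hpc⟩ := (hT u hu c hc).mp huc
    obtain ⟨huy, hpu⟩ := (hT a ha u hu).mp hau
    rcases (hp c hc hcy).2 with h | ⟨h1, h2⟩
    · exact huy (hpc ▸ h)
    · exact hay (hpu ▸ (hpc ▸ h2))
  by_cases hb : b ∈ V₁ <;> by_cases hb' : b' ∈ V₁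
  · by_cases hc : c ∈ V₁
    · obtain ⟨_, h1⟩ := (hT b hb c hc).mp hbc
      obtain ⟨_, h2⟩ := (hT b' hb' c hc).mp hb'c
      rw [← h1, ← h2]
    · obtain ⟨h1, h2⟩ := (hmatch b hb c hc).mp hbc
      obtain ⟨h3, h4⟩ := (hmatch b' hb' c hc).mp hb'c
      exact hfinj b hb b' hb' h1 h3 (h2.trans h4.symm)
  · exact absurd (key b b' hb hb' hab hbc hab' hb'c) (fun h => h)
  · exact absurd (key b' b hb' hb hab' hb'c hab hbc) (fun h => h)
  · have ha : a ∈ V₁ := by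
      by_contra ha
      exact hV₂ a ha b hb hab
    obtain ⟨_, h1⟩ := (hmatch a ha b hb).mp hab
    obtain ⟨_, h2⟩ := (hmatch a ha b' hb').mp hab'
    rw [← h1, ← h2]
end

section
/- The number of arcs in the digraph D₁ (for even n) equals (n²+4n−4)/4, and D₁ has zero loops and its adjacency matrix A satisfies that A² is a 0-1 matrix. -/
open Finset

/-- The digraph `D₁` (even `n ≥ 4`) has exactly `(n²+4n−4)/4` arcs, no loops, and its
adjacency matrix `A` satisfies that `A²` is a 0-1 matrix. Here `V₁` (of size `n/2+1`)
carries `T(y₁,y₂)` (the 2-cycle `y₁ ↔ y₂` together with two 2-arborescences rooted at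
`y₁` and `y₂`, encoded by a parent function `p`), `V₂ = V₁ᶜ` has no internal arcs,
`V₁ \ {y₁,y₂}` matches `V₂` via `f`, and every vertex of `V₂` points to all of `V₁`. -/
theorem stmt_15 (n : ℕ) (hn : 4 ≤ n) (heven : Even n)
    (adj : Fin n → Fin n → Prop) [DecidableRel adj]
    (V₁ : Finset (Fin n)) (y₁ y₂ : Fin n)
    (hy₁ : y₁ ∈ V₁) (hy₂ : y₂ ∈ V₁) (hy12 : y₁ ≠ y₂)
    (hcard : V₁.card = n / 2 + 1)
    (p : Fin n → Fin n)
    (hT : ∀ a ∈ V₁, ∀ b ∈ V₁,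
      (adj a b ↔ ((a = y₁ ∧ b = y₂) ∨ (a = y₂ ∧ b = y₁) ∨
        (b ≠ y₁ ∧ b ≠ y₂ ∧ p b = a))))
    (hp : ∀ b ∈ V₁, b ≠ y₁ → b ≠ y₂ → p b ∈ V₁ ∧ p b ≠ b ∧
      (p b = y₁ ∨ p b = y₂ ∨ p (p b) = y₁ ∨ p (p b) = y₂))
    (hV₂ : ∀ a ∉ V₁, ∀ b ∉ V₁, ¬ adj a b)
    (f : Fin n → Fin n)
    (hf : ∀ a ∈ V₁, a ≠ y₁ → a ≠ y₂ → f a ∉ V₁)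
    (hfinj : ∀ a ∈ V₁, ∀ b ∈ V₁, a ≠ y₁ → a ≠ y₂ → b ≠ y₁ → b ≠ y₂ → f a = f b → a = b)
    (hfsurj : ∀ u ∉ V₁, ∃ a ∈ V₁, a ≠ y₁ ∧ a ≠ y₂ ∧ f a = u)
    (hmatch : ∀ a ∈ V₁, ∀ b ∉ V₁, (adj a b ↔ a ≠ y₁ ∧ a ≠ y₂ ∧ f a = b))
    (hback : ∀ u ∉ V₁, ∀ x ∈ V₁, adj u x)
    (A : Matrix (Fin n) (Fin n) ℤ)
    (hAdef : ∀ i j, A i j = if adj i j then 1 else 0) :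
    (univ.filter fun q : Fin n × Fin n => adj q.1 q.2).card = (n^2 + 4*n - 4) / 4 ∧
    (∀ i, ¬ adj i i) ∧
    (∀ i l, (A * A) i l = 0 ∨ (A * A) i l = 1) := by
  -- unique in-neighbor within V₁
  have huniq : ∀ l : Fin n, ∀ j₁ ∈ V₁, ∀ j₂ ∈ V₁, adj j₁ l → adj j₂ l → j₁ = j₂ := by
    intro l j₁ h1 j₂ h2 a1 a2
    by_cases hl : l ∈ V₁
    · rcases (hT j₁ h1 l hl).1 a1 with ⟨e1, e2⟩ | ⟨e1, e2⟩ | ⟨e1, e2, e3⟩ <;>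
        rcases (hT j₂ h2 l hl).1 a2 with ⟨g1, g2⟩ | ⟨g1, g2⟩ | ⟨g1, g2, g3⟩ <;>
        first
          | (exact e1.trans g1.symm)
          | (exact absurd (e2.symm.trans g2) hy12)
          | (exact absurd (g2.symm.trans e2) hy12)
          | (exact absurd e2 g1)
          | (exact absurd e2 g2)
          | (exact absurd g2 e1)
          | (exact absurd g2 e2)
          | (exact e3.symm.trans g3)
    · obtain ⟨n1, n2, e1⟩ := (hmatch j₁ h1 l hl).1 a1
      obtain ⟨m1, m2, e2⟩ := (hmatch j₂ h2 l hl).1 a2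
      exact hfinj j₁ h1 j₂ h2 n1 n2 m1 m2 (e1.trans e2.symm)
  -- unique midpoint of a 2-walk
  have hmid : ∀ i l j₁ j₂ : Fin n, adj i j₁ → adj j₁ l → adj i j₂ → adj j₂ l → j₁ = j₂ := by
    have key : ∀ i l j₁ j₂ : Fin n, j₁ ∈ V₁ → j₂ ∉ V₁ →
        adj i j₁ → adj j₁ l → adj i j₂ → adj j₂ l → False := by
      intro i l j₁ j₂ hj1 hj2 a1 b1 a2 b2
      have hi : i ∈ V₁ := by
        by_contra hi; exact hV₂ i hi j₂ hj2 a2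
      obtain ⟨i1, i2, _⟩ := (hmatch i hi j₂ hj2).1 a2
      have hl : l ∈ V₁ := by
        by_contra hl; exact hV₂ j₂ hj2 l hl b2
      rcases (hT i hi j₁ hj1).1 a1 with ⟨e1, e2⟩ | ⟨e1, e2⟩ | ⟨e1, e2, e3⟩
      · exact i1 e1
      · exact i2 e1
      · rcases (hT j₁ hj1 l hl).1 b1 with ⟨g1, g2⟩ | ⟨g1, g2⟩ | ⟨g1, g2, g3⟩
        · exact e1 g1
        · exact e2 g1
        · obtain ⟨-, -, h3⟩ := hp l hl g1 g2
          rcases h3 with h | h | h | h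
          · exact e1 (g3 ▸ h)
          · exact e2 (g3 ▸ h)
          · exact i1 (by rw [← h, g3, e3])
          · exact i2 (by rw [← h, g3, e3])
    intro i l j₁ j₂ a1 b1 a2 b2
    by_cases hj1 : j₁ ∈ V₁ <;> by_cases hj2 : j₂ ∈ V₁
    · exact huniq l j₁ hj1 j₂ hj2 b1 b2
    · exact absurd (key i l j₁ j₂ hj1 hj2 a1 b1 a2 b2) not_false
    · exact absurd (key i l j₂ j₁ hj2 hj1 a2 b2 a1 b1) not_false
    · have hi : i ∈ V₁ := by
        by_contra hi; exact hV₂ i hi j₁ hj1 a1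
      obtain ⟨-, -, e1⟩ := (hmatch i hi j₁ hj1).1 a1
      obtain ⟨-, -, e2⟩ := (hmatch i hi j₂ hj2).1 a2
      exact e1.symm.trans e2
  -- no loops
  have hloop : ∀ i, ¬ adj i i := by
    intro i hai
    by_cases hi : i ∈ V₁
    · rcases (hT i hi i hi).1 hai with ⟨e1, e2⟩ | ⟨e1, e2⟩ | ⟨e1, e2, e3⟩
      · exact hy12 (e1.symm.trans e2)
      · exact hy12 (e2.symm.trans e1)
      · exact (hp i hi e1 e2).2.1 e3
    · exact hV₂ i hi i hi hai
  refine ⟨?_, hloop, ?_⟩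
  · -- edge count
    obtain ⟨m, hm⟩ := heven
    have hm2 : 2 ≤ m := by omega
    have hn2 : n / 2 = m := by omega
    rw [hn2] at hcard
    set W : Finset (Fin n) := V₁ \ {y₁, y₂} with hW
    have hWcard : W.card = m - 1 := by
      rw [hW, card_sdiff_of_subset (by
        intro x hx
        simp only [mem_insert, mem_singleton] at hx
        rcases hx with rfl | rfl <;> assumption)]
      rw [hcard, card_insert_of_notMem (by simpa using hy12), card_singleton]
      omega
    have hWmem : ∀ x, x ∈ W ↔ x ∈ V₁ ∧ x ≠ y₁ ∧ x ≠ y₂ := by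
      intro x; simp [hW, and_assoc]
    set S1 : Finset (Fin n × Fin n) := V₁ᶜ ×ˢ V₁ with hS1
    set S2 : Finset (Fin n × Fin n) := W.image (fun a => (a, f a)) with hS2
    set S3 : Finset (Fin n × Fin n) := {(y₁, y₂), (y₂, y₁)} with hS3
    set S4 : Finset (Fin n × Fin n) := W.image (fun b => (p b, b)) with hS4
    have hE : (univ.filter fun q : Fin n × Fin n => adj q.1 q.2) = (S1 ∪ S2) ∪ (S3 ∪ S4) := by
      ext ⟨a, b⟩
      simp only [mem_filter, mem_univ, true_and, mem_union, hS1, hS2, hS3, hS4,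
        mem_product, mem_compl, mem_image, mem_insert, mem_singleton, Prod.mk.injEq]
      constructor
      · intro hab
        by_cases ha : a ∈ V₁
        · by_cases hb : b ∈ V₁
          · rcases (hT a ha b hb).1 hab with ⟨e1, e2⟩ | ⟨e1, e2⟩ | ⟨e1, e2, e3⟩
            · exact Or.inr (Or.inl (Or.inl ⟨e1, e2⟩))
            · exact Or.inr (Or.inl (Or.inr ⟨e1, e2⟩))
            · exact Or.inr (Or.inr ⟨b, (hWmem b).2 ⟨hb, e1, e2⟩, e3, rfl⟩)
          · obtain ⟨n1, n2, e⟩ := (hmatch a ha b hb).1 hab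
            exact Or.inl (Or.inr ⟨a, (hWmem a).2 ⟨ha, n1, n2⟩, rfl, e⟩)
        · have hb : b ∈ V₁ := by
            by_contra hb; exact hV₂ a ha b hb hab
          exact Or.inl (Or.inl ⟨ha, hb⟩)
      · rintro ((⟨ha, hb⟩ | ⟨x, hx, hxa, hxb⟩) | (⟨ha, hb⟩ | ⟨ha, hb⟩) | ⟨x, hx, hxa, hxb⟩)
        · exact hback a ha b hb
        · obtain ⟨hx1, hx2, hx3⟩ := (hWmem x).1 hx
          rw [← hxa, ← hxb]
          exact (hmatch x hx1 (f x) (hf x hx1 hx2 hx3)).2 ⟨hx2, hx3, rfl⟩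
        · rw [ha, hb]
          exact (hT y₁ hy₁ y₂ hy₂).2 (Or.inl ⟨rfl, rfl⟩)
        · rw [ha, hb]
          exact (hT y₂ hy₂ y₁ hy₁).2 (Or.inr (Or.inl ⟨rfl, rfl⟩))
        · obtain ⟨hx1, hx2, hx3⟩ := (hWmem x).1 hx
          rw [← hxa, ← hxb]
          exact (hT (p x) (hp x hx1 hx2 hx3).1 x hx1).2 (Or.inr (Or.inr ⟨hx2, hx3, rfl⟩))
    have c1 : S1.card = (m - 1) * (m + 1) := by
      rw [hS1, card_product, card_compl, hcard, Fintype.card_fin]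
      congr 1
      omega
    have c2 : S2.card = m - 1 := by
      rw [hS2, card_image_of_injOn (fun a _ b _ h => congrArg Prod.fst h), hWcard]
    have c3 : S3.card = 2 := by
      rw [hS3, card_insert_of_notMem (by simp [Prod.ext_iff]; intro h; exact absurd h hy12),
        card_singleton]
    have c4 : S4.card = m - 1 := by
      rw [hS4, card_image_of_injOn (fun a _ b _ h => congrArg Prod.snd h), hWcard]
    have d12 : Disjoint S1 S2 := by
      rw [disjoint_left]
      rintro ⟨a, b⟩ hq1 hq2
      rw [hS1, mem_product, mem_compl] at hq1
      rw [hS2, mem_image] at hq2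
      obtain ⟨x, hx, he⟩ := hq2
      simp only [Prod.mk.injEq] at he
      exact hq1.1 (he.1 ▸ ((hWmem x).1 hx).1)
    have d34 : Disjoint S3 S4 := by
      rw [disjoint_left]
      rintro ⟨a, b⟩ hq1 hq2
      rw [hS4, mem_image] at hq2
      obtain ⟨x, hx, he⟩ := hq2
      simp only [Prod.mk.injEq] at he
      obtain ⟨-, h1, h2⟩ := (hWmem x).1 hx
      rw [hS3, mem_insert, mem_singleton] at hq1
      simp only [Prod.mk.injEq] at hq1
      rcases hq1 with ⟨-, h⟩ | ⟨-, h⟩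
      · exact h2 (he.2.trans h)
      · exact h1 (he.2.trans h)
    have d'' : Disjoint (S1 ∪ S2) (S3 ∪ S4) := by
      rw [disjoint_left]
      rintro ⟨a, b⟩ hq1 hq2
      have hq2' : a ∈ V₁ ∧ b ∈ V₁ := by
        rw [mem_union] at hq2
        rcases hq2 with h | h
        · rw [hS3, mem_insert, mem_singleton] at h
          simp only [Prod.mk.injEq] at h
          rcases h with ⟨h1, h2⟩ | ⟨h1, h2⟩ <;> rw [h1, h2] <;>
            exact ⟨by assumption, by assumption⟩
        · rw [hS4, mem_image] at h
          obtain ⟨x, hx, he⟩ := h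
          simp only [Prod.mk.injEq] at he
          obtain ⟨hx1, hx2, hx3⟩ := (hWmem x).1 hx
          rw [← he.1, ← he.2]
          exact ⟨(hp x hx1 hx2 hx3).1, hx1⟩
      rw [mem_union] at hq1
      rcases hq1 with h | h
      · rw [hS1, mem_product, mem_compl] at h
        exact h.1 hq2'.1
      · rw [hS2, mem_image] at h
        obtain ⟨x, hx, he⟩ := h
        simp only [Prod.mk.injEq] at he
        obtain ⟨hx1, hx2, hx3⟩ := (hWmem x).1 hx
        exact hf x hx1 hx2 hx3 (he.2 ▸ hq2'.2)
    rw [hE, card_union_of_disjoint d'', card_union_of_disjoint d12, card_union_of_disjoint d34,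
      c1, c2, c3, c4]
    obtain ⟨k, rfl⟩ : ∃ k, m = k + 2 := ⟨m - 2, by omega⟩
    have h1 : k + 2 - 1 = k + 1 := by omega
    have hn' : n = 2 * k + 4 := by omega
    rw [h1, hn']
    have hsq : (2 * k + 4) ^ 2 = 4 * (k * k) + 16 * k + 16 := by ring
    have hml : (k + 1) * (k + 2 + 1) = k * k + 4 * k + 3 := by ring
    omega
  · -- A² is 0-1
    intro i l
    have hval : (A * A) i l =
        ((univ.filter fun j => adj i j ∧ adj j l).card : ℤ) := by
      rw [Matrix.mul_apply]
      rw [← Finset.sum_boole]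
      apply Finset.sum_congr rfl
      intro j _
      rw [hAdef, hAdef]
      by_cases h1 : adj i j <;> by_cases h2 : adj j l <;> simp [h1, h2]
    have hle : (univ.filter fun j => adj i j ∧ adj j l).card ≤ 1 := by
      apply Finset.card_le_one.2
      intro j₁ hj₁ j₂ hj₂
      rw [mem_filter] at hj₁ hj₂
      exact hmid i l j₁ j₂ hj₁.2.1 hj₁.2.2 hj₂.2.1 hj₂.2.2
    rcases Nat.le_one_iff_eq_zero_or_eq_one.1 hle with h | h
    · left; rw [hval, h]; rfl
    · right; rw [hval, h]; rfl
end

section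
/- Let A be an n×n 0-1 matrix with zero trace such that A² is a 0-1 matrix, n ≥ 8, and suppose A is extremal (has ⌊(n²+4n)/4⌋ − 1 ones). Fix v with maximum row sum Δ⁺ and V₁, V₂ as usual, and suppose some row u has three 1-entries in columns of V₂. Then the number of 1-entries of A is at most (n − Δ⁺ − 3)Δ⁺ + 2n, which is strictly less than ⌊(n²+4n)/4⌋ − 1 — a contradiction; hence no row has three 1-entries in V₂. -/
open Finset

private lemma key_arith (n : ℕ) (hn : 8 ≤ n) (k : ℤ) (hk : 4 * k ≤ ((n:ℤ) - 3)^2) :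
    k + 2 * n ≤ ((((n^2 + 4*n) / 4 : ℕ) : ℤ)) - 2 := by
  obtain ⟨m, hm | hm⟩ := Nat.even_or_odd' n
  · subst hm
    have hq : (2*m)^2 + 4*(2*m) = 4 * (m^2 + 2*m) := by ring
    rw [hq, Nat.mul_div_cancel_left _ (by norm_num : 0 < 4)]
    have hm4 : (4:ℤ) ≤ (m:ℤ) := by exact_mod_cast (by omega : 4 ≤ m)
    push_cast at hk
    have hk' : 4*k ≤ 4*((m:ℤ)*(m:ℤ)) - 12*(m:ℤ) + 9 := by nlinarith [hk]
    have key : ∀ T : ℤ, 4*k ≤ 4*T - 12*(m:ℤ) + 9 → 4 ≤ (m:ℤ) →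
        k + 2*(2*(m:ℤ)) ≤ (T + 2*(m:ℤ)) - 2 := by intro T h1 h2; omega
    have := key ((m:ℤ)*(m:ℤ)) hk' hm4
    push_cast
    nlinarith [this]
  · subst hm
    have hq : (2*m+1)^2 + 4*(2*m+1) = 4 * (m^2 + 3*m + 1) + 1 := by ring
    rw [hq, Nat.mul_add_div (by norm_num : 0 < 4)]
    norm_num
    have hm4 : (4:ℤ) ≤ (m:ℤ) := by exact_mod_cast (by omega : 4 ≤ m)
    push_cast at hk
    have hk' : 4*k ≤ 4*((m:ℤ)*(m:ℤ)) - 8*(m:ℤ) + 4 := by nlinarith [hk]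
    have key : ∀ T : ℤ, 4*k ≤ 4*T - 8*(m:ℤ) + 4 → 4 ≤ (m:ℤ) →
        k + 2*(2*(m:ℤ)+1) ≤ (T + 3*(m:ℤ) + 1) - 2 := by intro T h1 h2; omega
    have := key ((m:ℤ)*(m:ℤ)) hk' hm4
    push_cast
    nlinarith [this]

private lemma row_sum_card {n : ℕ} (A : Matrix (Fin n) (Fin n) ℤ)
    (hA : ∀ i j, A i j = 0 ∨ A i j = 1) (i : Fin n) :
    ∑ j, A i j = ((univ.filter fun j => A i j = 1).card : ℤ) := by
  rw [Finset.card_filter]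
  push_cast
  refine Finset.sum_congr rfl fun j _ => ?_
  rcases hA i j with h | h <;> simp [h]

private lemma select_rows {n : ℕ} (A : Matrix (Fin n) (Fin n) ℤ)
    (hA : ∀ i j, A i j = 0 ∨ A i j = 1) (w : Fin n) :
    ∑ k ∈ univ.filter (fun k => A w k = 1), (∑ j, A k j) = ∑ j, (A * A) w j := by
  simp only [Matrix.mul_apply]
  conv_rhs => rw [Finset.sum_comm]
  rw [Finset.sum_filter]
  refine Finset.sum_congr rfl fun k _ => ?_
  rcases hA w k with h | h <;> simp [h, Finset.mul_sum]

private lemma sq_row_le {n : ℕ} (A : Matrix (Fin n) (Fin n) ℤ)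
    (hA2 : ∀ i j, (A * A) i j = 0 ∨ (A * A) i j = 1) (w : Fin n) :
    ∑ j, (A * A) w j ≤ (n : ℤ) := by
  calc ∑ j, (A * A) w j ≤ ∑ _j : Fin n, (1:ℤ) :=
        Finset.sum_le_sum fun j _ => by rcases hA2 w j with h | h <;> simp [h]
    _ = n := by simp

/-- First part of the proof of Lemma 5: if `A` is extremal (`n ≥ 8`, zero trace, square
a 0-1 matrix, `⌊(n²+4n)/4⌋ − 1` ones) and `v` attains the maximum row sum, then no row
`u` has three 1-entries in the columns of `V₂ = {j : a_{vj} = 0}`. -/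
theorem stmt_16 (n : ℕ) (hn : 8 ≤ n) (A : Matrix (Fin n) (Fin n) ℤ)
    (hA : ∀ i j, A i j = 0 ∨ A i j = 1)
    (htr : ∀ i, A i i = 0)
    (hA2 : ∀ i j, (A * A) i j = 0 ∨ (A * A) i j = 1)
    (hext : ∑ i, ∑ j, A i j = (((n^2 + 4*n) / 4 : ℕ) : ℤ) - 1)
    (v : Fin n) (hv : IsGreatest (Set.range fun i => ∑ j, A i j) (∑ j, A v j)) :
    ∀ u, ¬ (3 ≤ (univ.filter fun j => A v j = 0 ∧ A u j = 1).card) := by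
  intro u hu
  classical
  have h01 : ∀ i j, (A i j = 0) ↔ ¬ (A i j = 1) := by
    intro i j; rcases hA i j with h | h <;> simp [h]
  have hnn : ∀ i j, (0:ℤ) ≤ A i j := fun i j => by rcases hA i j with h | h <;> simp [h]
  set R : Fin n → ℤ := fun i => ∑ j, A i j with hRdef
  have hRnn : ∀ i, 0 ≤ R i := fun i => Finset.sum_nonneg fun j _ => hnn i j
  have hRle : ∀ i, R i ≤ R v := fun i => hv.2 ⟨i, rfl⟩
  set S1 := univ.filter (fun k => A v k = 1) with hS1
  set S2 := (univ.filter fun k => ¬ (A v k = 1)).filter (fun k => A u k = 1) with hS2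
  set S3 := (univ.filter fun k => ¬ (A v k = 1)).filter (fun k => ¬ (A u k = 1)) with hS3
  -- hu in terms of S2
  have hu2 : 3 ≤ S2.card := by
    rw [hS2, Finset.filter_filter]
    refine le_trans hu (le_of_eq ?_)
    congr 1
    apply Finset.filter_congr
    intro j _
    rw [h01 v j, and_comm]
  -- split sums
  have hsplit : ∑ i, R i = ∑ i ∈ S1, R i + (∑ i ∈ S2, R i + ∑ i ∈ S3, R i) := by
    rw [← Finset.sum_filter_add_sum_filter_not univ (fun k => A v k = 1) R,
      ← Finset.sum_filter_add_sum_filter_not (univ.filter fun k => ¬ (A v k = 1))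
        (fun k => A u k = 1) R]
  have hcard : S1.card + (S2.card + S3.card) = n := by
    rw [hS1, hS2, hS3, Finset.card_filter_add_card_filter_not,
      Finset.card_filter_add_card_filter_not, Finset.card_univ, Fintype.card_fin]
  -- bound 1
  have hB1 : ∑ i ∈ S1, R i ≤ (n:ℤ) := by
    rw [hS1]
    calc ∑ k ∈ univ.filter (fun k => A v k = 1), R k = ∑ j, (A * A) v j :=
          select_rows A hA v
      _ ≤ n := sq_row_le A hA2 v
  -- bound 2
  have hB2 : ∑ i ∈ S2, R i ≤ (n:ℤ) := by
    have hsub : S2 ⊆ univ.filter (fun k => A u k = 1) := by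
      rw [hS2, Finset.filter_filter]
      exact Finset.filter_subset_filter _ (fun x hx => Finset.mem_univ x) |>.trans
        (by intro x hx; simp only [Finset.mem_filter] at hx ⊢; exact ⟨hx.1, hx.2.2⟩)
    calc ∑ i ∈ S2, R i ≤ ∑ k ∈ univ.filter (fun k => A u k = 1), R k :=
          Finset.sum_le_sum_of_subset_of_nonneg hsub (fun i _ _ => hRnn i)
      _ = ∑ j, (A * A) u j := select_rows A hA u
      _ ≤ n := sq_row_le A hA2 u
  -- bound 3
  have hRv : R v = (S1.card : ℤ) := row_sum_card A hA v
  have hB3 : ∑ i ∈ S3, R i ≤ (S3.card : ℤ) * (S1.card : ℤ) := by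
    calc ∑ i ∈ S3, R i ≤ ∑ _i ∈ S3, R v := Finset.sum_le_sum fun i _ => hRle i
      _ = (S3.card : ℤ) * R v := by rw [Finset.sum_const, nsmul_eq_mul]
      _ = (S3.card : ℤ) * (S1.card : ℤ) := by rw [hRv]
  -- combine
  set D : ℕ := S1.card
  set C2 : ℕ := S2.card
  set C3 : ℕ := S3.card
  have hC3 : (C3:ℤ) ≤ (n:ℤ) - D - 3 := by
    have : (D:ℤ) + ((C2:ℤ) + (C3:ℤ)) = n := by exact_mod_cast hcard
    have h2 : (3:ℤ) ≤ C2 := by exact_mod_cast hu2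
    linarith
  have hprod : (C3:ℤ) * (D:ℤ) ≤ ((n:ℤ) - D - 3) * D :=
    mul_le_mul_of_nonneg_right hC3 (by positivity)
  have hk : 4 * (((n:ℤ) - D - 3) * D) ≤ ((n:ℤ) - 3)^2 := by
    nlinarith [sq_nonneg ((n:ℤ) - 3 - 2*(D:ℤ))]
  have hle := key_arith n hn _ hk
  have htot : ∑ i, R i = (((n^2 + 4*n) / 4 : ℕ) : ℤ) - 1 := hext
  linarith [hsplit, hB1, hB2, hB3, hprod, hle, htot]
end

section
/- Let D be a loopless digraph avoiding two distinct directed 2-walks with the same endpoints, with vertex v of maximum out-degree, V₁ = N⁺(v), V₂ its complement. Suppose arcs within V₂ from u₁ to u₂ exist, every vertex of V₁ has exactly one out-neighbor within V₁ (V₁ → V₁), both u₁ and u₂ have out-degree Δ⁺, and every vertex has at most one out-neighbor in V₂. Then, writing u₁' for the unique vertex of V₁ not an out-neighbor of u₁: u₁' has an arc to every V₁-out-neighbor of u₂, u₂ has an out-neighbor in V₂, and the V₁-out-neighbors of u₂ are exactly V₁ ∖ {u₁'}. -/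
open Finset

/-- Lemma 6 (le6), second part: in an `F`-free loopless digraph with `v` of maximum
out-degree, `V₁ = N⁺(v)`, if `u₁ → u₂` is an arc inside `V₂`, every vertex of `V₁`
has exactly one in-neighbour in `V₁` (`V₁ → V₁`), `u₁` and `u₂` both have out-degree
`Δ⁺`, every vertex has at most one out-neighbour in `V₂`, and `u₁'` is the unique
vertex of `V₁` that is not an out-neighbour of `u₁`, then `u₁'` points to every
`V₁`-out-neighbour of `u₂`, `u₂` has an out-neighbour in `V₂`, and the
`V₁`-out-neighbours of `u₂` are exactly `V₁ \ {u₁'}`. -/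
theorem stmt_18 (n : ℕ) (adj : Fin n → Fin n → Prop) [DecidableRel adj]
    (hirr : ∀ a, ¬ adj a a)
    (hfree : ∀ a c b b', adj a b → adj b c → adj a b' → adj b' c → b = b')
    (v : Fin n)
    (hmax : ∀ x : Fin n,
      (univ.filter fun y => adj x y).card ≤ (univ.filter fun y => adj v y).card)
    (u₁ u₂ : Fin n) (hu₁ : ¬ adj v u₁) (hu₂ : ¬ adj v u₂) (h12 : adj u₁ u₂)
    (hV₁V₁ : ∀ w, adj v w → ∃! j, adj v j ∧ adj j w)
    (hdeg₁ : (univ.filter fun y => adj u₁ y).card = (univ.filter fun y => adj v y).card)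
    (hdeg₂ : (univ.filter fun y => adj u₂ y).card = (univ.filter fun y => adj v y).card)
    (hα : ∀ x : Fin n, (univ.filter fun y => ¬ adj v y ∧ adj x y).card ≤ 1)
    (u₁' : Fin n) (hu₁' : adj v u₁') (hmiss : ¬ adj u₁ u₁')
    (hrest : ∀ j, adj v j → j ≠ u₁' → adj u₁ j) :
    (∀ t, adj v t → adj u₂ t → adj u₁' t) ∧
    (∃ w, ¬ adj v w ∧ adj u₂ w) ∧
    (∀ j, adj v j → (adj u₂ j ↔ j ≠ u₁')) := by
  classical
  have key : ∀ t, adj v t → adj u₂ t → adj u₁' t := by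
    intro t hvt h2t
    obtain ⟨j, ⟨hvj, hjt⟩, huniq⟩ := hV₁V₁ t hvt
    by_contra h
    have hj : j ≠ u₁' := by rintro rfl; exact h hjt
    have heq : u₂ = j := hfree u₁ t u₂ j h12 h2t (hrest j hvj hj) hjt
    exact hu₂ (by rwa [heq])
  have hne : ∀ t, adj v t → adj u₂ t → t ≠ u₁' := by
    rintro t hvt h2t rfl
    exact hirr _ (key _ hvt h2t)
  set Δ := (univ.filter fun y => adj v y).card with hΔ
  have hsplit := Finset.card_filter_add_card_filter_not
    (s := univ.filter fun y => adj u₂ y) (p := fun y => adj v y)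
  rw [filter_filter, filter_filter] at hsplit
  set A := univ.filter (fun y => adj u₂ y ∧ adj v y) with hA
  set B := univ.filter (fun y => adj u₂ y ∧ ¬ adj v y) with hB
  have hAsub : A ⊆ (univ.filter fun y => adj v y).erase u₁' := by
    intro t ht
    simp only [hA, mem_filter, mem_univ, true_and] at ht
    exact mem_erase.mpr ⟨hne t ht.2 ht.1, mem_filter.mpr ⟨mem_univ t, ht.2⟩⟩
  have hu₁'mem : u₁' ∈ (univ.filter fun y => adj v y) := mem_filter.mpr ⟨mem_univ _, hu₁'⟩
  have hΔpos : 1 ≤ Δ := card_pos.mpr ⟨u₁', hu₁'mem⟩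
  have herase : ((univ.filter fun y => adj v y).erase u₁').card = Δ - 1 :=
    card_erase_of_mem hu₁'mem
  have hAle : A.card ≤ Δ - 1 := herase ▸ card_le_card hAsub
  have hBle : B.card ≤ 1 := by
    have := hα u₂
    have hBeq : B = univ.filter (fun y => ¬ adj v y ∧ adj u₂ y) := by
      apply filter_congr; intro x _; simp [and_comm]
    rw [hBeq]; exact this
  have hsum : A.card + B.card = Δ := by rw [hsplit]; exact hdeg₂
  have hAcard : A.card = Δ - 1 := by omega
  have hBcard : B.card = 1 := by omega
  refine ⟨key, ?_, ?_⟩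
  · obtain ⟨w, hw⟩ := card_pos.mp (by omega : 0 < B.card)
    simp only [hB, mem_filter, mem_univ, true_and] at hw
    exact ⟨w, hw.2, hw.1⟩
  · have hAeq : A = (univ.filter fun y => adj v y).erase u₁' :=
      eq_of_subset_of_card_le hAsub (by omega)
    intro j hvj
    constructor
    · intro h2j; exact hne j hvj h2j
    · intro hj
      have : j ∈ A := by
        rw [hAeq]
        exact mem_erase.mpr ⟨hj, mem_filter.mpr ⟨mem_univ j, hvj⟩⟩
      simp only [hA, mem_filter, mem_univ, true_and] at this
      exact this.1
end
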